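/- arXiv:2307.13442 — 7 statements merged into one kernel-verified Lean document; each statement's English description precedes it below -/
import Mathlib

section
/- Let N ≥ 1 be an integer and K, K₁ > 0. There exists M > 0, depending only on N, K, K₁, with the following property. Let f : ℝ²×ℝ² → [0,∞) be measurable with ∬_{ℝ²×ℝ²} (1+|x|+|v|²) f(x,v) dx dv ≤ K, set ρ(x) = ∫_{ℝ²} f(x,v) dv, and let ξ₁,…,ξ_N, η₁,…,η_N ∈ ℝ² with ξ_α ≠ ξ_β for α ≠ β and Σ_α (|ξ_α| + |η_α|) ≤ K. Assume the integrals ∬_{ℝ²×ℝ²} |ln|x−y|| ρ(x)ρ(y) dx dy and Σ_α ∫_{ℝ²} |ln|x−ξ_α|| ρ(x) dx are finite, and that the energy 𝓔 = (1/2)∬ |v|² f dx dv + (1/2)Σ_α |η_α|² − (1/2)∬ ln|x−y| ρ(x)ρ(y) dx dy − Σ_α ∫ ln|x−ξ_α| ρ(x) dx − (1/2)Σ_{α≠β} ln|ξ_α−ξ_β| satisfies 𝓔 ≤ K₁. Then |ξ_α − ξ_β| ≥ M for all α ≠ β. -/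
open MeasureTheory Real Filter
open scoped ENNReal Topology

noncomputable abbrev E2 := EuclideanSpace ℝ (Fin 2)

/-!
Since `log r ≤ r`, the logarithmic potential obeys `log ‖x - y‖ ≤ ‖x‖ + ‖y‖`. Hence the
plasma–plasma and plasma–charge interaction energies are bounded above by first moments of `ρ`,
and every charge–charge term by `∑ ‖ξ_a‖ ≤ K`. The kinetic terms being nonnegative, the energy
bound `𝓔 ≤ K₁` then leaves only `-log ‖ξ_α - ξ_β‖` (which occurs twice in the ordered pair sum)
to absorb, so it is bounded above by a constant depending on `N, K, K₁` alone.
-/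

open Finset

theorem log_norm_sub_le_norm_add_norm {E : Type*} [SeminormedAddCommGroup E] (x y : E) :
    log ‖x - y‖ ≤ ‖x‖ + ‖y‖ :=
  (log_le_self (norm_nonneg _)).trans (norm_sub_le x y)

theorem sum_sum_erase_le_add_of_nonpos {ι : Type*} [Fintype ι] [DecidableEq ι]
    {g : ι → ι → ℝ} (hg : ∀ a b, a ≠ b → g a b ≤ 0) {α β : ι} (hαβ : α ≠ β) :
    ∑ a, ∑ b ∈ univ.erase a, g a b ≤ g α β + g β α := by
  have hrow : ∀ a b, a ≠ b → ∑ c ∈ univ.erase a, g a c ≤ g a b := fun a b hab => by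
    simpa using sum_le_sum_of_subset_of_nonpos' (s := {b}) (t := univ.erase a)
      (by simpa using hab.symm) fun c hc _ => hg a c (mem_erase.1 hc).1.symm
  calc ∑ a, ∑ b ∈ univ.erase a, g a b
      ≤ ∑ a ∈ {α, β}, ∑ b ∈ univ.erase a, g a b :=
        sum_le_sum_of_subset_of_nonpos' (subset_univ _) fun a _ _ =>
          sum_nonpos fun b hb => hg a b (mem_erase.1 hb).1.symm
    _ ≤ g α β + g β α := by
        rw [sum_pair hαβ]
        exact add_le_add (hrow α β hαβ) (hrow β α hαβ.symm)

theorem sum_sum_erase_log_norm_sub_le {E ι : Type*} [SeminormedAddCommGroup E] [Fintype ι]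
    [DecidableEq ι] (ξ : ι → E) {α β : ι} (hαβ : α ≠ β) :
    ∑ a, ∑ b ∈ univ.erase a, log ‖ξ a - ξ b‖ ≤
      2 * log ‖ξ α - ξ β‖ + Fintype.card ι ^ 2 * ∑ a, ‖ξ a‖ := by
  set C := ∑ a, ‖ξ a‖
  have hC : 0 ≤ C := sum_nonneg fun a _ => norm_nonneg _
  have hpair := sum_sum_erase_le_add_of_nonpos (g := fun a b => log ‖ξ a - ξ b‖ - C)
    (fun a b hab => sub_nonpos.2 <| (log_norm_sub_le_norm_add_norm _ _).trans <|
      add_le_sum (fun c _ => norm_nonneg _) (mem_univ a) (mem_univ b) hab) hαβ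
  have hcount : ∑ a : ι, ∑ _b ∈ univ.erase a, C ≤ Fintype.card ι ^ 2 * C := by
    calc ∑ a : ι, ∑ _b ∈ univ.erase a, C ≤ ∑ _a : ι, ∑ _b : ι, C :=
          sum_le_sum fun a _ => sum_le_sum_of_subset_of_nonneg (erase_subset _ _)
            fun _ _ _ => hC
      _ = Fintype.card ι ^ 2 * C := by simp [sq, mul_assoc]
  simp only [sum_sub_distrib, norm_sub_rev (ξ β)] at hpair
  linarith

section Marginal

variable {α β : Type*} [MeasurableSpace α] [MeasurableSpace β] {μ : Measure α} {ν : Measure β}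
  [SFinite μ] [SFinite ν]

theorem integrable_mul_marginal_and_integral_le {f W : α × β → ℝ} {w : α → ℝ}
    (hf : Measurable f) (hf0 : ∀ z, 0 ≤ f z) (hw : Measurable w) (hw0 : ∀ x, 0 ≤ w x)
    (hwW : ∀ z, w z.1 ≤ W z) (hWf : Integrable (fun z => W z * f z) (μ.prod ν)) :
    Integrable (fun x => w x * ∫ v, f (x, v) ∂ν) μ ∧
      ∫ x, w x * ∫ v, f (x, v) ∂ν ∂μ ≤ ∫ z, W z * f z ∂(μ.prod ν) := by
  have hwf : Integrable (fun z => w z.1 * f z) (μ.prod ν) :=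
    hWf.mono' ((hw.comp measurable_fst).mul hf).aestronglyMeasurable <| ae_of_all _ fun z => by
      rw [norm_of_nonneg (mul_nonneg (hw0 _) (hf0 z))]
      exact mul_le_mul_of_nonneg_right (hwW z) (hf0 z)
  have hmarg := hwf.integral_prod_left
  simp only [integral_const_mul] at hmarg
  refine ⟨hmarg, ?_⟩
  calc ∫ x, w x * ∫ v, f (x, v) ∂ν ∂μ = ∫ z, w z.1 * f z ∂(μ.prod ν) := by
        simp only [integral_prod _ hwf, integral_const_mul]
    _ ≤ ∫ z, W z * f z ∂(μ.prod ν) :=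
        integral_mono hwf hWf fun z => mul_le_mul_of_nonneg_right (hwW z) (hf0 z)

end Marginal

theorem integrable_mul_of_integrable_abs_mul {X : Type*} [MeasurableSpace X] {μ : Measure X}
    {g h : X → ℝ} (hg : AEStronglyMeasurable g μ) (hh : AEStronglyMeasurable h μ)
    (h0 : ∀ x, 0 ≤ h x) (hi : Integrable (fun x => |g x| * h x) μ) :
    Integrable (fun x => g x * h x) μ :=
  hi.mono' (hg.mul hh) <| ae_of_all _ fun x => by
    rw [norm_mul, norm_of_nonneg (h0 x), norm_eq_abs]

section LogInteraction

variable {E : Type*} [NormedAddCommGroup E] [MeasurableSpace E] [OpensMeasurableSpace E]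
  {μ : Measure E} {ρ : E → ℝ}

theorem integral_log_norm_sub_const_mul_le (hρ : Measurable ρ) (hρ0 : ∀ x, 0 ≤ ρ x)
    (hρi : Integrable ρ μ) (hxρ : Integrable (fun x => ‖x‖ * ρ x) μ) (a : E)
    (hlog : Integrable (fun x => |log ‖x - a‖| * ρ x) μ) :
    ∫ x, log ‖x - a‖ * ρ x ∂μ ≤ (∫ x, ‖x‖ * ρ x ∂μ) + ‖a‖ * ∫ x, ρ x ∂μ := by
  have hlog_meas : Measurable fun x => log ‖x - a‖ :=
    measurable_log.comp (by fun_prop : Continuous fun x => ‖x - a‖).measurable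
  have hlog' := integrable_mul_of_integrable_abs_mul hlog_meas.aestronglyMeasurable
    hρ.aestronglyMeasurable hρ0 hlog
  calc ∫ x, log ‖x - a‖ * ρ x ∂μ ≤ ∫ x, ‖x‖ * ρ x + ‖a‖ * ρ x ∂μ :=
        integral_mono hlog' (hxρ.add (hρi.const_mul _)) fun x => by
          simpa only [add_mul] using
            mul_le_mul_of_nonneg_right (log_norm_sub_le_norm_add_norm x a) (hρ0 x)
    _ = (∫ x, ‖x‖ * ρ x ∂μ) + ‖a‖ * ∫ x, ρ x ∂μ := by
        rw [integral_add hxρ (hρi.const_mul _), integral_const_mul]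

theorem sum_integral_log_norm_sub_mul_le {ι : Type*} [Fintype ι] (hρ : Measurable ρ)
    (hρ0 : ∀ x, 0 ≤ ρ x) (hρi : Integrable ρ μ) (hxρ : Integrable (fun x => ‖x‖ * ρ x) μ)
    (ξ : ι → E) (hlog : ∀ a, Integrable (fun x => |log ‖x - ξ a‖| * ρ x) μ) :
    ∑ a, ∫ x, log ‖x - ξ a‖ * ρ x ∂μ ≤
      Fintype.card ι * (∫ x, ‖x‖ * ρ x ∂μ) + (∑ a, ‖ξ a‖) * ∫ x, ρ x ∂μ := by
  calc ∑ a, ∫ x, log ‖x - ξ a‖ * ρ x ∂μ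
      ≤ ∑ a, ((∫ x, ‖x‖ * ρ x ∂μ) + ‖ξ a‖ * ∫ x, ρ x ∂μ) :=
        sum_le_sum fun a _ =>
          integral_log_norm_sub_const_mul_le hρ hρ0 hρi hxρ (ξ a) (hlog a)
    _ = Fintype.card ι * (∫ x, ‖x‖ * ρ x ∂μ) + (∑ a, ‖ξ a‖) * ∫ x, ρ x ∂μ := by
        rw [sum_add_distrib, sum_const, card_univ, nsmul_eq_mul, sum_mul]

theorem integral_log_norm_sub_mul_mul_le [SecondCountableTopology E] [SFinite μ]
    (hρ : Measurable ρ) (hρ0 : ∀ x, 0 ≤ ρ x)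
    (hρi : Integrable ρ μ) (hxρ : Integrable (fun x => ‖x‖ * ρ x) μ)
    (hlog : Integrable (fun q : E × E => |log ‖q.1 - q.2‖| * (ρ q.1 * ρ q.2)) (μ.prod μ)) :
    ∫ q, log ‖q.1 - q.2‖ * (ρ q.1 * ρ q.2) ∂(μ.prod μ) ≤
      2 * ((∫ x, ‖x‖ * ρ x ∂μ) * ∫ x, ρ x ∂μ) := by
  have hlog_meas : Measurable fun q : E × E => log ‖q.1 - q.2‖ :=
    measurable_log.comp (by fun_prop : Continuous fun q : E × E => ‖q.1 - q.2‖).measurable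
  have hlog' := integrable_mul_of_integrable_abs_mul hlog_meas.aestronglyMeasurable
    (by fun_prop : Measurable fun q : E × E => ρ q.1 * ρ q.2).aestronglyMeasurable
    (fun q => mul_nonneg (hρ0 q.1) (hρ0 q.2)) hlog
  have h₁ : Integrable (fun q : E × E => ‖q.1‖ * ρ q.1 * ρ q.2) (μ.prod μ) := hxρ.mul_prod hρi
  have h₂ : Integrable (fun q : E × E => ρ q.1 * (‖q.2‖ * ρ q.2)) (μ.prod μ) := hρi.mul_prod hxρ
  calc ∫ q, log ‖q.1 - q.2‖ * (ρ q.1 * ρ q.2) ∂(μ.prod μ)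
      ≤ ∫ q, ‖q.1‖ * ρ q.1 * ρ q.2 + ρ q.1 * (‖q.2‖ * ρ q.2) ∂(μ.prod μ) :=
        integral_mono hlog' (h₁.add h₂) fun q => by
          have := mul_le_mul_of_nonneg_right (log_norm_sub_le_norm_add_norm q.1 q.2)
            (mul_nonneg (hρ0 q.1) (hρ0 q.2))
          linarith
    _ = 2 * ((∫ x, ‖x‖ * ρ x ∂μ) * ∫ x, ρ x ∂μ) := by
        rw [integral_add h₁ h₂, integral_prod_mul (fun x => ‖x‖ * ρ x) ρ,
          integral_prod_mul ρ (fun x => ‖x‖ * ρ x)]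
        ring

end LogInteraction

theorem stmt2_general (N : ℕ) (K K₁ : ℝ) :
    ∃ M : ℝ, 0 < M ∧
      ∀ (f : E2 × E2 → ℝ) (ξ η : Fin N → E2),
        Measurable f → (∀ z, 0 ≤ f z) →
        (∀ α β, α ≠ β → ξ α ≠ ξ β) →
        Integrable (fun z : E2 × E2 => (1 + ‖z.1‖ + ‖z.2‖ ^ 2) * f z) →
        (∫ z : E2 × E2, (1 + ‖z.1‖ + ‖z.2‖ ^ 2) * f z) ≤ K →
        (∑ α, (‖ξ α‖ + ‖η α‖)) ≤ K →
        Integrable (fun q : E2 × E2 =>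
          |Real.log ‖q.1 - q.2‖| * ((∫ v, f (q.1, v)) * (∫ v, f (q.2, v)))) →
        (∀ α, Integrable (fun x : E2 => |Real.log ‖x - ξ α‖| * (∫ v, f (x, v)))) →
        (1 / 2) * (∫ z : E2 × E2, ‖z.2‖ ^ 2 * f z) + (1 / 2) * (∑ α, ‖η α‖ ^ 2)
            - (1 / 2) * (∫ q : E2 × E2,
                Real.log ‖q.1 - q.2‖ * ((∫ v, f (q.1, v)) * (∫ v, f (q.2, v))))
            - (∑ α, ∫ x : E2, Real.log ‖x - ξ α‖ * (∫ v, f (x, v)))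
            - (1 / 2) * (∑ α, ∑ β ∈ Finset.univ.erase α, Real.log ‖ξ α - ξ β‖) ≤ K₁ →
        ∀ α β, α ≠ β → M ≤ ‖ξ α - ξ β‖ := by
  refine ⟨exp (-(K₁ + 2 * K ^ 2 + N * K + N ^ 2 * K / 2)), exp_pos _, ?_⟩
  intro f ξ η hf hf0 hξ hfW hfWK hξηK hlogρρ hlogρξ hE α β hαβ
  rw [Measure.volume_eq_prod] at hfW hfWK hlogρρ hE
  have hρ : Measurable fun x : E2 => ∫ v, f (x, v) :=
    hf.stronglyMeasurable.integral_prod_right'.measurable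
  have hρ0 : ∀ x : E2, 0 ≤ ∫ v, f (x, v) := fun x => integral_nonneg fun v => hf0 _
  obtain ⟨hρi, hρK⟩ := integrable_mul_marginal_and_integral_le (w := fun _ => 1) hf hf0
    measurable_const (fun _ => zero_le_one)
    (fun z => by nlinarith [norm_nonneg z.1, sq_nonneg ‖z.2‖]) hfW
  simp only [one_mul] at hρi hρK
  obtain ⟨hxρi, hxρK⟩ := integrable_mul_marginal_and_integral_le (w := norm) hf hf0
    measurable_norm norm_nonneg (fun z => by nlinarith [sq_nonneg ‖z.2‖]) hfW
  have hξK : ∑ a, ‖ξ a‖ ≤ K :=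
    (sum_le_sum fun a _ => le_add_of_nonneg_right (norm_nonneg (η a))).trans hξηK
  have hK : 0 ≤ K := (sum_nonneg fun a _ => norm_nonneg (ξ a)).trans hξK
  have hpair := integral_log_norm_sub_mul_mul_le hρ hρ0 hρi hxρi hlogρρ
  have hcharge := sum_integral_log_norm_sub_mul_le hρ hρ0 hρi hxρi ξ hlogρξ
  have hcharges := sum_sum_erase_log_norm_sub_le ξ hαβ
  have hkin : 0 ≤ ∫ z, ‖z.2‖ ^ 2 * f z ∂(volume.prod volume) :=
    integral_nonneg fun z => mul_nonneg (sq_nonneg _) (hf0 z)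
  have hkin' : 0 ≤ ∑ a, ‖η a‖ ^ 2 := sum_nonneg fun a _ => sq_nonneg _
  rw [Fintype.card_fin] at hcharge hcharges
  have hm₀ := hρK.trans hfWK
  have hm₁ := hxρK.trans hfWK
  have hm₁m₀ := mul_le_mul hm₁ hm₀ (integral_nonneg hρ0) hK
  have hξm₀ := mul_le_mul hξK hm₀ (integral_nonneg hρ0) hK
  have hNm₁ := mul_le_mul_of_nonneg_left hm₁ N.cast_nonneg
  have hNξ := mul_le_mul_of_nonneg_left hξK (sq_nonneg (N : ℝ))
  have hlog : -(K₁ + 2 * K ^ 2 + N * K + N ^ 2 * K / 2) ≤ log ‖ξ α - ξ β‖ := by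
    linarith
  rwa [← exp_le_exp, exp_log (norm_pos_iff.2 (sub_ne_zero.2 (hξ α β hαβ)))] at hlog

/-- Given `N ≥ 1` and `K, K₁ > 0`, there is `M > 0` depending only on
`N, K, K₁` such that: for any nonnegative measurable phase-space density `f` with
`∬ (1+|x|+|v|²) f ≤ K`, spatial density `ρ(x) = ∫ f(x,v) dv`, and point charges
`ξ_α ≠ ξ_β` (`α ≠ β`) with velocities `η_α` satisfying `Σ (|ξ_α|+|η_α|) ≤ K`, if the
logarithmic interaction integrals are finite and the total energy `𝓔 ≤ K₁`, then
`|ξ_α − ξ_β| ≥ M` for all `α ≠ β`. -/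
theorem stmt2 (N : ℕ) (hN : 1 ≤ N) (K K₁ : ℝ) (hK : 0 < K) (hK₁ : 0 < K₁) :
    ∃ M : ℝ, 0 < M ∧
      ∀ (f : E2 × E2 → ℝ) (ξ η : Fin N → E2),
        Measurable f → (∀ z, 0 ≤ f z) →
        (∀ α β, α ≠ β → ξ α ≠ ξ β) →
        Integrable (fun z : E2 × E2 => (1 + ‖z.1‖ + ‖z.2‖ ^ 2) * f z) →
        (∫ z : E2 × E2, (1 + ‖z.1‖ + ‖z.2‖ ^ 2) * f z) ≤ K →
        (∑ α, (‖ξ α‖ + ‖η α‖)) ≤ K →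
        Integrable (fun q : E2 × E2 =>
          |Real.log ‖q.1 - q.2‖| * ((∫ v, f (q.1, v)) * (∫ v, f (q.2, v)))) →
        (∀ α, Integrable (fun x : E2 => |Real.log ‖x - ξ α‖| * (∫ v, f (x, v)))) →
        (1 / 2) * (∫ z : E2 × E2, ‖z.2‖ ^ 2 * f z) + (1 / 2) * (∑ α, ‖η α‖ ^ 2)
            - (1 / 2) * (∫ q : E2 × E2,
                Real.log ‖q.1 - q.2‖ * ((∫ v, f (q.1, v)) * (∫ v, f (q.2, v))))
            - (∑ α, ∫ x : E2, Real.log ‖x - ξ α‖ * (∫ v, f (x, v)))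
            - (1 / 2) * (∑ α, ∑ β ∈ Finset.univ.erase α, Real.log ‖ξ α - ξ β‖) ≤ K₁ →
        ∀ α β, α ≠ β → M ≤ ‖ξ α - ξ β‖ :=
  stmt2_general N K K₁
end

section
/- Let K > 0. There exists a constant C > 0, depending only on K, such that for every measurable ρ : ℝ² → [0,∞) with ∫_{ℝ²} ρ(x) dx ≤ K and ∬_{ℝ²×ℝ²} |ln|x−y|| ρ(x)ρ(y) dx dy ≤ K, one has |ln r|^{1/2} ∫_{B(x₀,r)} ρ(x) dx ≤ C for every x₀ ∈ ℝ² and every 0 < r < 1/2. -/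
/-!
Two points of `B(x₀, r)` are at distance less than `2r ≤ 1`, so off the (null) diagonal the
kernel `|ln |x - y||` is at least `|ln 2r|` on `B × B`. Restricting the energy to `B × B` gives
`|ln 2r| m² ≤ K` for the mass `m ≤ K` of the ball, and `|ln r| = |ln 2r| + ln 2` then yields
`|ln r| m² ≤ K + K²`, i.e. the bound with `C = √(K + K²)`.
-/

open MeasureTheory Real Filter
open scoped ENNReal Topology

namespace MeasureTheory

variable {α : Type*} [MeasurableSpace α]

theorem Measure.ae_prod_fst_ne_snd {μ ν : Measure α} [MeasurableEq α] [SFinite ν]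
    [NullSingletonClass ν] :
    ∀ᵐ q ∂μ.prod ν, q.1 ≠ q.2 :=
  (Measure.ae_prod_iff_ae_ae (p := fun q : α × α => q.1 ≠ q.2)
    measurableSet_diagonal.compl).2 <|
    ae_of_all _ fun x => ae_iff.2 <| measure_mono_null (fun y hy => by simp_all [eq_comm])
      (measure_singleton x)

theorem mul_sq_setLIntegral_le_lintegral_prod {μ : Measure α} [SFinite μ] {f : α → ℝ≥0∞}
    (hf : AEMeasurable f μ) {W : α × α → ℝ≥0∞} {s : Set α} (hs : MeasurableSet s) {c : ℝ≥0∞}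
    (hW : ∀ᵐ q ∂μ.prod μ, q ∈ s ×ˢ s → c ≤ W q) :
    c * (∫⁻ x in s, f x ∂μ) ^ 2 ≤ ∫⁻ q, W q * (f q.1 * f q.2) ∂μ.prod μ := by
  have hff : AEMeasurable (fun q : α × α => f q.1 * f q.2)
      ((μ.restrict s).prod (μ.restrict s)) :=
    hf.restrict.comp_fst.mul hf.restrict.comp_snd
  calc c * (∫⁻ x in s, f x ∂μ) ^ 2
      = ∫⁻ q in s ×ˢ s, c * (f q.1 * f q.2) ∂μ.prod μ := by
        rw [← Measure.prod_restrict, lintegral_const_mul'' _ hff,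
          lintegral_prod_mul hf.restrict hf.restrict, sq]
    _ ≤ ∫⁻ q in s ×ˢ s, W q * (f q.1 * f q.2) ∂μ.prod μ :=
        setLIntegral_mono_ae' (hs.prod hs)
          (hW.mono fun q hq hqs => mul_le_mul_left (hq hqs) _)
    _ ≤ ∫⁻ q, W q * (f q.1 * f q.2) ∂μ.prod μ := setLIntegral_le_lintegral _ _

end MeasureTheory

theorem Real.abs_log_le_abs_log_of_le {a b : ℝ} (ha : 0 < a) (hab : a ≤ b) (hb : b ≤ 1) :
    |log b| ≤ |log a| := by
  rw [abs_of_nonpos (log_nonpos (ha.le.trans hab) hb),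
    abs_of_nonpos (log_nonpos ha.le (hab.trans hb))]
  exact neg_le_neg (log_le_log ha hab)

theorem Real.abs_log_eq_abs_log_two_mul_add {r : ℝ} (hr : 0 < r) (hr1 : 2 * r ≤ 1) :
    |log r| = |log (2 * r)| + log 2 := by
  rw [abs_of_nonpos (log_nonpos hr.le (by linarith)),
    abs_of_nonpos (log_nonpos (by positivity) hr1),
    log_mul two_ne_zero hr.ne']
  ring

noncomputable def logInteractionEnergy {E : Type*} [NormedAddCommGroup E] [MeasurableSpace E]
    (μ : Measure E) (ρ : E → ℝ) : ℝ≥0∞ :=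
  ∫⁻ q, ENNReal.ofReal (|log ‖q.1 - q.2‖| * (ρ q.1 * ρ q.2)) ∂μ.prod μ

theorem abs_log_two_mul_mul_sq_lintegral_ball_le_logInteractionEnergy {E : Type*}
    [NormedAddCommGroup E] [MeasurableSpace E] [OpensMeasurableSpace E] [MeasurableEq E]
    {μ : Measure E} [SFinite μ] [NullSingletonClass μ] {ρ : E → ℝ} (hρ : Measurable ρ)
    (hρ0 : ∀ x, 0 ≤ ρ x) (x₀ : E) {r : ℝ} (hr1 : 2 * r ≤ 1) :
    ENNReal.ofReal |log (2 * r)| * (∫⁻ x in Metric.ball x₀ r, ENNReal.ofReal (ρ x) ∂μ) ^ 2 ≤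
      logInteractionEnergy μ ρ := by
  have hW : ∀ᵐ q ∂μ.prod μ, q ∈ Metric.ball x₀ r ×ˢ Metric.ball x₀ r →
      ENNReal.ofReal |log (2 * r)| ≤ ENNReal.ofReal |log ‖q.1 - q.2‖| := by
    filter_upwards [Measure.ae_prod_fst_ne_snd] with q hne ⟨h1, h2⟩
    have hlt : ‖q.1 - q.2‖ < 2 * r := by
      rw [← dist_eq_norm]
      linarith [dist_triangle_right q.1 q.2 x₀, Metric.mem_ball.1 h1, Metric.mem_ball.1 h2]
    exact ENNReal.ofReal_le_ofReal
      (abs_log_le_abs_log_of_le (norm_pos_iff.2 (sub_ne_zero.2 hne)) hlt.le hr1)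
  refine (mul_sq_setLIntegral_le_lintegral_prod hρ.ennreal_ofReal.aemeasurable
    Metric.isOpen_ball.measurableSet hW).trans_eq (lintegral_congr fun q => ?_)
  rw [ENNReal.ofReal_mul (abs_nonneg _), ENNReal.ofReal_mul (hρ0 _)]

/-- **non-concentration.** Given `K > 0` there is `C > 0` depending only
on `K` such that every nonnegative measurable `ρ` with mass `≤ K` and logarithmic
interaction energy `≤ K` satisfies `|ln r|^{1/2} ∫_{B(x₀,r)} ρ ≤ C` for all `x₀`
and `0 < r < 1/2`. -/
theorem stmt3 (K : ℝ) (hK : 0 < K) :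
    ∃ C : ℝ, 0 < C ∧ ∀ ρ : E2 → ℝ,
      Measurable ρ → (∀ x, 0 ≤ ρ x) →
      (∫⁻ x, ENNReal.ofReal (ρ x)) ≤ ENNReal.ofReal K →
      (∫⁻ q : E2 × E2, ENNReal.ofReal (|Real.log ‖q.1 - q.2‖| * (ρ q.1 * ρ q.2)))
          ≤ ENNReal.ofReal K →
      ∀ (x₀ : E2) (r : ℝ), 0 < r → r < 1 / 2 →
        |Real.log r| ^ ((1 : ℝ) / 2) * (∫ x in Metric.ball x₀ r, ρ x) ≤ C := by
  refine ⟨√(K + K ^ 2), sqrt_pos.2 (by positivity), fun ρ hρ hρ0 hmass hE x₀ r hr hr2 => ?_⟩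
  have hr1 : 2 * r ≤ 1 := by linarith
  set m := ∫ x in Metric.ball x₀ r, ρ x
  set M := ∫⁻ x in Metric.ball x₀ r, ENNReal.ofReal (ρ x)
  have hm : m = M.toReal :=
    integral_eq_lintegral_of_nonneg_ae (ae_of_all _ hρ0) hρ.aestronglyMeasurable
  have hm0 : 0 ≤ m := hm ▸ ENNReal.toReal_nonneg
  have hmK : m ≤ K := hm ▸ ENNReal.toReal_le_of_le_ofReal hK.le
    ((setLIntegral_le_lintegral _ _).trans hmass)
  have henergy : |log (2 * r)| * m ^ 2 ≤ K := by
    have h := ENNReal.toReal_le_of_le_ofReal hK.le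
      ((abs_log_two_mul_mul_sq_lintegral_ball_le_logInteractionEnergy hρ hρ0 x₀ hr1).trans hE)
    rwa [ENNReal.toReal_mul, ENNReal.toReal_pow, ENNReal.toReal_ofReal (abs_nonneg _),
      ← hm] at h
  have hlog : |log r| * m ^ 2 ≤ K + K ^ 2 := by
    rw [abs_log_eq_abs_log_two_mul_add hr hr1, add_mul]
    have : m ^ 2 ≤ K ^ 2 := pow_le_pow_left₀ hm0 hmK 2
    nlinarith [log_two_lt_d9, sq_nonneg m]
  calc |log r| ^ ((1 : ℝ) / 2) * m = √(|log r| * m ^ 2) := by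
        rw [sqrt_mul (abs_nonneg _), sqrt_sq hm0, sqrt_eq_rpow]
    _ ≤ √(K + K ^ 2) := sqrt_le_sqrt hlog
end

section
/- Let 0 ≤ k ≤ l be real numbers. There exists a constant C = C(k,l) > 0 such that for every bounded measurable f : ℝ²×ℝ² → [0,∞) and every measurable h : ℝ²×ℝ² → [0,∞) satisfying h(x,v) ≥ |v|²/2 for all (x,v), one has ‖ x ↦ ∫_{ℝ²} h(x,v)^{k/2} f(x,v) dv ‖_{L^{(l+2)/(k+2)}(ℝ²)} ≤ C ‖f‖_{L^∞(ℝ²×ℝ²)}^{(l−k)/(l+2)} · ( ∬_{ℝ²×ℝ²} h(x,v)^{l/2} f(x,v) dx dv )^{(k+2)/(l+2)}. -/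
open MeasureTheory Real Filter
open scoped ENNReal Topology

/-!
Split the velocity integral at the energy level `h = R`. On `{h ≤ R}` the integrand is at most
`R^{k/2} ‖f‖_∞`, and this set lies in the disc `|v| ≤ √(2R)` of area `2πR`; on `{h > R}` one trades
`h^{k/2}` for `R^{-(l-k)/2} h^{l/2}`. Hence for every `R > 0`,
`∫ h^{k/2} f dv ≤ 2π ‖f‖_∞ R^{(k+2)/2} + R^{-(l-k)/2} ∫ h^{l/2} f dv`, and optimizing in `R` gives
`∫ h^{k/2} f dv ≤ 2 (2π ‖f‖_∞)^{(l-k)/(l+2)} (∫ h^{l/2} f dv)^{(k+2)/(l+2)}` for a.e. `x`.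
Raising to the power `(l+2)/(k+2)` and integrating in `x` gives the claim.
-/

theorem ENNReal.mul_div_rpow {a b : ℝ≥0∞} (ha0 : a ≠ 0) (hat : a ≠ ⊤) {s : ℝ} (hs : 0 ≤ s) :
    a * (b / a) ^ s = a ^ (1 - s) * b ^ s := by
  rw [ENNReal.div_rpow_of_nonneg _ _ hs, ENNReal.rpow_sub _ _ ha0 hat, ENNReal.rpow_one,
    mul_div_assoc']
  simp only [div_eq_mul_inv]
  ring

theorem le_two_mul_rpow_mul_rpow_of_forall_le {a b g : ℝ≥0∞} {α β : ℝ} (hα : 0 < α) (hβ : 0 ≤ β)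
    (ha0 : a ≠ 0) (hat : a ≠ ⊤)
    (H : ∀ R : ℝ, 0 < R → g ≤ a * ENNReal.ofReal (R ^ α) + b * ENNReal.ofReal (R ^ (-β))) :
    g ≤ 2 * a ^ (β / (α + β)) * b ^ (α / (α + β)) := by
  have hαβ : 0 < α + β := by linarith
  rcases eq_or_ne b ⊤ with rfl | hbt
  · rw [ENNReal.top_rpow_of_pos (div_pos hα hαβ), ENNReal.mul_top]
    · exact le_top
    · simp [ENNReal.rpow_eq_zero_iff, ha0, hat]
  rcases eq_or_ne b 0 with rfl | hb0
  · have hlim : Tendsto (fun R : ℝ => a * ENNReal.ofReal (R ^ α)) (𝓝[>] 0) (𝓝 0) := by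
      have hR : Tendsto (fun R : ℝ => R ^ α) (𝓝[>] 0) (𝓝 0) := by
        simpa [Real.zero_rpow hα.ne'] using
          ((Real.continuousAt_rpow_const 0 α (Or.inr hα.le)).tendsto).mono_left nhdsWithin_le_nhds
      simpa using ENNReal.Tendsto.const_mul (ENNReal.tendsto_ofReal hR) (Or.inr hat)
    have hg : g ≤ 0 := ge_of_tendsto hlim
      (eventually_nhdsWithin_of_forall fun R hR => by simpa using H R hR)
    exact hg.trans zero_le
  -- the optimal `R` balances the two terms: `R ^ (α + β) = b / a`
  set t : ℝ≥0∞ := b / a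
  have ht0 : t ≠ 0 := by simp [t, ENNReal.div_eq_zero_iff, hb0, hat]
  have htt : t ≠ ⊤ := by simp [t, ENNReal.div_eq_top, hbt, ha0]
  have htR : 0 < t.toReal := ENNReal.toReal_pos ht0 htt
  have hpow : ∀ γ : ℝ, ENNReal.ofReal ((t.toReal ^ (α + β)⁻¹) ^ γ) = t ^ (γ / (α + β)) := by
    intro γ
    rw [← Real.rpow_mul htR.le, inv_mul_eq_div, ← ENNReal.ofReal_rpow_of_pos htR,
      ENNReal.ofReal_toReal htt]
  have hsum : β / (α + β) + α / (α + β) = 1 := by field_simp; ring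
  have hterm₁ : a * t ^ (α / (α + β)) = a ^ (β / (α + β)) * b ^ (α / (α + β)) := by
    rw [ENNReal.mul_div_rpow ha0 hat (by positivity), ← hsum, add_sub_cancel_right]
  have hterm₂ : b * t ^ (-β / (α + β)) = a ^ (β / (α + β)) * b ^ (α / (α + β)) := by
    rw [neg_div, ENNReal.rpow_neg, ← ENNReal.inv_rpow, ENNReal.inv_div (Or.inl hat) (Or.inl ha0),
      ENNReal.mul_div_rpow hb0 hbt (by positivity), ← hsum, add_sub_cancel_left, mul_comm]
  calc g ≤ a * ENNReal.ofReal ((t.toReal ^ (α + β)⁻¹) ^ α)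
        + b * ENNReal.ofReal ((t.toReal ^ (α + β)⁻¹) ^ (-β)) := H _ (by positivity)
    _ = 2 * a ^ (β / (α + β)) * b ^ (α / (α + β)) := by
      rw [hpow, hpow, hterm₁, hterm₂, two_mul, add_mul]

section EnergySplit

variable {Ω : Type*} [MeasurableSpace Ω] {μ : Measure Ω} {h F : Ω → ℝ} {k l R : ℝ} {N : ℝ≥0∞}

theorem setLIntegral_sublevel_rpow_mul_le (hk : 0 ≤ k) (hh0 : ∀ v, 0 ≤ h v)
    (hF : ∀ᵐ v ∂μ, ENNReal.ofReal (F v) ≤ N) :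
    ∫⁻ v in {v | h v ≤ R}, ENNReal.ofReal (h v ^ k * F v) ∂μ
      ≤ ENNReal.ofReal (R ^ k) * N * μ {v | h v ≤ R} := by
  calc ∫⁻ v in {v | h v ≤ R}, ENNReal.ofReal (h v ^ k * F v) ∂μ
      ≤ ∫⁻ _ in {v | h v ≤ R}, ENNReal.ofReal (R ^ k) * N ∂μ := by
        refine setLIntegral_mono_ae aemeasurable_const ?_
        filter_upwards [hF] with v hv hvR
        rw [ENNReal.ofReal_mul (Real.rpow_nonneg (hh0 v) k)]
        gcongr
        exact hh0 v
    _ = ENNReal.ofReal (R ^ k) * N * μ {v | h v ≤ R} := setLIntegral_const _ _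

theorem setLIntegral_compl_sublevel_rpow_mul_le (hh : Measurable h) (hR : 0 < R) (hkl : k ≤ l) :
    ∫⁻ v in {v | h v ≤ R}ᶜ, ENNReal.ofReal (h v ^ k * F v) ∂μ
      ≤ ENNReal.ofReal (R ^ (k - l)) * ∫⁻ v, ENNReal.ofReal (h v ^ l * F v) ∂μ := by
  have hle : ∀ v ∈ {v | h v ≤ R}ᶜ, ENNReal.ofReal (h v ^ k * F v)
      ≤ ENNReal.ofReal (R ^ (k - l)) * ENNReal.ofReal (h v ^ l * F v) := by
    intro v hv
    have hvR : R < h v := not_le.mp hv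
    have hv0 : 0 < h v := hR.trans hvR
    rw [show h v ^ k * F v = h v ^ (k - l) * (h v ^ l * F v) by
        rw [← mul_assoc, ← Real.rpow_add hv0, sub_add_cancel],
      ENNReal.ofReal_mul (Real.rpow_nonneg hv0.le _)]
    exact mul_le_mul_left
      (ENNReal.ofReal_le_ofReal (Real.rpow_le_rpow_of_nonpos hR hvR.le (by linarith))) _
  calc ∫⁻ v in {v | h v ≤ R}ᶜ, ENNReal.ofReal (h v ^ k * F v) ∂μ
      ≤ ∫⁻ v in {v | h v ≤ R}ᶜ,
          ENNReal.ofReal (R ^ (k - l)) * ENNReal.ofReal (h v ^ l * F v) ∂μ :=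
        setLIntegral_mono' (measurableSet_le hh measurable_const).compl hle
    _ ≤ ∫⁻ v, ENNReal.ofReal (R ^ (k - l)) * ENNReal.ofReal (h v ^ l * F v) ∂μ :=
        setLIntegral_le_lintegral _ _
    _ = ENNReal.ofReal (R ^ (k - l)) * ∫⁻ v, ENNReal.ofReal (h v ^ l * F v) ∂μ :=
        lintegral_const_mul' _ _ ENNReal.ofReal_ne_top

theorem lintegral_rpow_mul_le_interpolation {c s : ℝ} (hc : 0 < c) (hs : 0 < s) (hk : 0 ≤ k)
    (hkl : k ≤ l) (hN : N ≠ ⊤) (hh : Measurable h) (hh0 : ∀ v, 0 ≤ h v)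
    (hvol : ∀ R, 0 < R → μ {v | h v ≤ R} ≤ ENNReal.ofReal (c * R ^ s))
    (hF : ∀ᵐ v ∂μ, ENNReal.ofReal (F v) ≤ N) :
    ∫⁻ v, ENNReal.ofReal (h v ^ k * F v) ∂μ
      ≤ 2 * (ENNReal.ofReal c * N) ^ ((l - k) / (l + s))
        * (∫⁻ v, ENNReal.ofReal (h v ^ l * F v) ∂μ) ^ ((k + s) / (l + s)) := by
  rcases eq_or_ne N 0 with rfl | hN0
  · have hzero : ∀ᵐ v ∂μ, ENNReal.ofReal (h v ^ k * F v) = 0 := by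
      filter_upwards [hF] with v hv
      rw [ENNReal.ofReal_mul (Real.rpow_nonneg (hh0 v) k), nonpos_iff_eq_zero.mp hv, mul_zero]
    rw [lintegral_congr_ae hzero, lintegral_zero]
    exact zero_le
  have hls : l + s = (k + s) + (l - k) := by ring
  rw [hls]
  refine le_two_mul_rpow_mul_rpow_of_forall_le (by linarith) (by linarith)
    (mul_ne_zero (by simpa using hc) hN0) (ENNReal.mul_ne_top ENNReal.ofReal_ne_top hN)
    fun R hR => ?_
  calc ∫⁻ v, ENNReal.ofReal (h v ^ k * F v) ∂μ
      = ∫⁻ v in {v | h v ≤ R}, ENNReal.ofReal (h v ^ k * F v) ∂μ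
        + ∫⁻ v in {v | h v ≤ R}ᶜ, ENNReal.ofReal (h v ^ k * F v) ∂μ :=
        (lintegral_add_compl _ (measurableSet_le hh measurable_const)).symm
    _ ≤ ENNReal.ofReal (R ^ k) * N * ENNReal.ofReal (c * R ^ s)
        + ENNReal.ofReal (R ^ (k - l)) * ∫⁻ v, ENNReal.ofReal (h v ^ l * F v) ∂μ := by
        gcongr
        · exact (setLIntegral_sublevel_rpow_mul_le hk hh0 hF).trans (by gcongr; exact hvol R hR)
        · exact setLIntegral_compl_sublevel_rpow_mul_le hh hR hkl
    _ = ENNReal.ofReal c * N * ENNReal.ofReal (R ^ (k + s))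
        + (∫⁻ v, ENNReal.ofReal (h v ^ l * F v) ∂μ) * ENNReal.ofReal (R ^ (-(l - k))) := by
        rw [neg_sub, Real.rpow_add hR, ENNReal.ofReal_mul hc.le,
          ENNReal.ofReal_mul (Real.rpow_nonneg hR.le k)]
        ring

end EnergySplit

theorem lintegral_rpow_rpow_inv_le_of_ae_le {α : Type*} [MeasurableSpace α] {μ : Measure α}
    {g m : α → ℝ≥0∞} {K : ℝ≥0∞} {P : ℝ} (hP : 0 < P) (hK : K ≠ ⊤)
    (hg : ∀ᵐ x ∂μ, g x ≤ K * m x ^ P⁻¹) :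
    (∫⁻ x, g x ^ P ∂μ) ^ P⁻¹ ≤ K * (∫⁻ x, m x ∂μ) ^ P⁻¹ := by
  have hgP : ∀ᵐ x ∂μ, g x ^ P ≤ K ^ P * m x := by
    filter_upwards [hg] with x hx
    calc g x ^ P ≤ (K * m x ^ P⁻¹) ^ P := ENNReal.rpow_le_rpow hx hP.le
      _ = K ^ P * m x := by
        rw [ENNReal.mul_rpow_of_nonneg _ _ hP.le, ← ENNReal.rpow_mul, inv_mul_cancel₀ hP.ne',
          ENNReal.rpow_one]
  calc (∫⁻ x, g x ^ P ∂μ) ^ P⁻¹ ≤ (∫⁻ x, K ^ P * m x ∂μ) ^ P⁻¹ :=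
        ENNReal.rpow_le_rpow (lintegral_mono_ae hgP) (inv_nonneg.mpr hP.le)
    _ = K * (∫⁻ x, m x ∂μ) ^ P⁻¹ := by
        rw [lintegral_const_mul' _ _ (ENNReal.rpow_ne_top_of_nonneg hP.le hK),
          ENNReal.mul_rpow_of_nonneg _ _ (inv_nonneg.mpr hP.le), ← ENNReal.rpow_mul,
          mul_inv_cancel₀ hP.ne', ENNReal.rpow_one]

theorem ae_ae_ofReal_le_eLpNorm_top {α β : Type*} [MeasurableSpace α] [MeasurableSpace β]
    {μ : Measure α} {ν : Measure β} [SFinite ν] (f : α × β → ℝ) :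
    ∀ᵐ x ∂μ, ∀ᵐ y ∂ν, ENNReal.ofReal (f (x, y)) ≤ eLpNorm f ⊤ (μ.prod ν) := by
  have hf : ∀ᵐ z ∂μ.prod ν, ENNReal.ofReal (f z) ≤ eLpNorm f ⊤ (μ.prod ν) := by
    rw [eLpNorm_exponent_top]
    filter_upwards [ae_le_eLpNormEssSup (f := f)] with z hz
    exact (Real.ofReal_le_enorm _).trans hz
  exact Measure.ae_ae_of_ae_prod hf

theorem volume_sublevel_le_of_half_sq_norm_le {h : E2 → ℝ} (hh : ∀ v, ‖v‖ ^ 2 / 2 ≤ h v)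
    {R : ℝ} (hR : 0 ≤ R) : volume {v | h v ≤ R} ≤ ENNReal.ofReal (2 * π * R) := by
  calc volume {v | h v ≤ R} ≤ volume (Metric.closedBall (0 : E2) √(2 * R)) := by
        refine measure_mono fun v (hv : h v ≤ R) => ?_
        rw [mem_closedBall_zero_iff, Real.le_sqrt (norm_nonneg v) (by positivity)]
        linarith [hh v]
    _ = ENNReal.ofReal (2 * π * R) := by
        rw [EuclideanSpace.volume_closedBall_fin_two, ← ENNReal.ofReal_pow (Real.sqrt_nonneg _),
          Real.sq_sqrt (by positivity), ← ENNReal.ofReal_mul (by positivity)]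
        ring_nf

/-- **kinetic interpolation inequality.** For real `0 ≤ k ≤ l` there is a
constant `C = C(k,l) > 0` such that for every bounded measurable nonnegative
phase-space density `f` and every measurable weight `h ≥ |v|²/2`,
`‖x ↦ ∫ h^{k/2} f dv‖_{L^{(l+2)/(k+2)}} ≤ C ‖f‖_∞^{(l-k)/(l+2)} (∬ h^{l/2} f)^{(k+2)/(l+2)}`. -/
theorem stmt5 (k l : ℝ) (hk : 0 ≤ k) (hkl : k ≤ l) :
    ∃ C : ℝ, 0 < C ∧ ∀ f h : E2 × E2 → ℝ,
      Measurable f → (∀ z, 0 ≤ f z) → (∃ A : ℝ, ∀ z, f z ≤ A) →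
      Measurable h → (∀ z, 0 ≤ h z) → (∀ z : E2 × E2, ‖z.2‖ ^ 2 / 2 ≤ h z) →
      (∫⁻ x : E2, (∫⁻ v : E2, ENNReal.ofReal (h (x, v) ^ (k / 2) * f (x, v)))
            ^ ((l + 2) / (k + 2))) ^ ((k + 2) / (l + 2))
        ≤ ENNReal.ofReal C * eLpNorm f ⊤ volume ^ ((l - k) / (l + 2)) *
            (∫⁻ z : E2 × E2, ENNReal.ofReal (h z ^ (l / 2) * f z)) ^ ((k + 2) / (l + 2)) := by
  set θ := (l - k) / (l + 2)
  refine ⟨2 * (2 * π) ^ θ, by positivity, fun f h hf hf0 ⟨A, hA⟩ hh hh0 hhv => ?_⟩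
  have hθ : 0 ≤ θ := div_nonneg (by linarith) (by linarith)
  set N := eLpNorm f ⊤ volume
  have hN : N ≠ ⊤ := (memLp_top_of_bound hf.aestronglyMeasurable A
    (ae_of_all _ fun z => (Real.norm_of_nonneg (hf0 z)).trans_le (hA z))).eLpNorm_ne_top
  have hK : 2 * (ENNReal.ofReal (2 * π) * N) ^ θ = ENNReal.ofReal (2 * (2 * π) ^ θ) * N ^ θ := by
    rw [ENNReal.mul_rpow_of_nonneg _ _ hθ, ENNReal.ofReal_rpow_of_pos (by positivity),
      ENNReal.ofReal_mul zero_le_two, ENNReal.ofReal_ofNat, mul_assoc]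
  have hmoment : ∀ᵐ x : E2, ∫⁻ v, ENNReal.ofReal (h (x, v) ^ (k / 2) * f (x, v))
      ≤ 2 * (ENNReal.ofReal (2 * π) * N) ^ θ
        * (∫⁻ v, ENNReal.ofReal (h (x, v) ^ (l / 2) * f (x, v))) ^ ((l + 2) / (k + 2))⁻¹ := by
    filter_upwards [ae_ae_ofReal_le_eLpNorm_top (μ := volume) (ν := volume) f] with x hx
    have := lintegral_rpow_mul_le_interpolation (h := fun v => h (x, v)) (F := fun v => f (x, v))
      (k := k / 2) (l := l / 2) (c := 2 * π) (s := 1) (by positivity) one_pos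
      (by linarith) (by linarith) hN (by fun_prop) (fun v => hh0 _)
      (fun R hR => by
        simpa using volume_sublevel_le_of_half_sq_norm_le (fun v => hhv (x, v)) hR.le) hx
    rwa [show (l / 2 - k / 2) / (l / 2 + 1) = θ by field_simp; rfl,
      show (k / 2 + 1) / (l / 2 + 1) = ((l + 2) / (k + 2))⁻¹ by rw [inv_div]; field_simp] at this
  have hprod : ∫⁻ z : E2 × E2, ENNReal.ofReal (h z ^ (l / 2) * f z)
      = ∫⁻ x, ∫⁻ v, ENNReal.ofReal (h (x, v) ^ (l / 2) * f (x, v)) :=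
    lintegral_prod _ (by fun_prop)
  rw [hprod, ← hK, ← inv_div (l + 2)]
  exact lintegral_rpow_rpow_inv_le_of_ae_le (div_pos (by linarith) (by linarith))
    (ENNReal.mul_ne_top ENNReal.ofNat_ne_top
      (ENNReal.rpow_ne_top_of_nonneg hθ (ENNReal.mul_ne_top ENNReal.ofReal_ne_top hN))) hmoment
end

section
/- Let ε > 0, N ≥ 1 an integer, M > 0, α ∈ {1,…,N}, and let I ⊂ ℝ be an open interval. Let X, V, ξ₁,…,ξ_N, η₁,…,η_N : I → ℝ² be differentiable functions and E : I×ℝ² → ℝ² a map such that for all s ∈ I: X(s) ≠ ξ_β(s) for every β; |ξ_β(s) − ξ_γ(s)| ≥ M for all β ≠ γ; X′(s) = V(s)/ε; V′(s) = V(s)^⊥/ε² + (1/ε)( E(s,X(s)) + Σ_{β=1}^N (X(s)−ξ_β(s))/|X(s)−ξ_β(s)|² ); ξ_β′(s) = η_β(s)/ε for every β; and η_α′(s) = η_α(s)^⊥/ε² + E(s,ξ_α(s))/ε + (1/ε) Σ_{β≠α} (ξ_α(s)−ξ_β(s))/|ξ_α(s)−ξ_β(s)|². Then for every s ∈ I with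 |X(s)−ξ_α(s)| ≤ M/2, the function r(s) = |X(s)−ξ_α(s)| is twice differentiable at s and 1/|X(s)−ξ_α(s)| ≤ ε² r″(s) + ε^{-1} |V(s)−η_α(s)| + |E(s,X(s))| + |E(s,ξ_α(s))| + 3N/M. -/
open MeasureTheory Real Filter
open scoped ENNReal Topology

/-- Rotation by `π/2`: `(a₁, a₂)ᵖ = (-a₂, a₁)`. -/
noncomputable def perp (a : E2) : E2 :=
  (WithLp.equiv 2 (Fin 2 → ℝ)).symm ![-a 1, a 0]

/-!
Write `Z = X - ξ_α`, `r = ‖Z‖` and `W = Z' = ε⁻¹ (V - η_α)`. Then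
`r'' = (⟪Z, W'⟫ + ‖W‖² - r'²) / r ≥ ⟪Z, W'⟫ / r` by Cauchy–Schwarz, since `r' = ⟪Z, W⟫ / r`.
The equations of motion give `ε² W' = Z / r² + A`, where `A` collects the magnetic term
`ε⁻¹ (V - η_α)^⊥`, the two values of `E` and the differences of the fields of the charges
`β ≠ α` at `X` and at `ξ_α`. As `X` lies within `M/2` of `ξ_α`, each of these differences is at
most `2/M + 1/M`, and `⟪Z, Z / r²⟫ / r = 1 / r` yields `1 / r ≤ ε² r'' + ‖A‖`.
-/

open scoped RealInnerProductSpace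

theorem perp_sub (a b : E2) : perp a - perp b = perp (a - b) := by
  ext i
  fin_cases i <;> (simp [perp, WithLp.equiv_symm_apply, PiLp.toLp_apply]; try ring)

theorem norm_perp (a : E2) : ‖perp a‖ = ‖a‖ := by
  rw [EuclideanSpace.norm_eq, EuclideanSpace.norm_eq]
  congr 1
  simp only [Fin.sum_univ_two, perp, WithLp.equiv_symm_apply, PiLp.toLp_apply,
    Matrix.cons_val_zero, Matrix.cons_val_one, Real.norm_eq_abs, sq_abs]
  ring

section InnerProductSpace

variable {F : Type*} [NormedAddCommGroup F] [InnerProductSpace ℝ F]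

theorem HasDerivAt.norm {f : ℝ → F} {f' : F} {s : ℝ} (hf : HasDerivAt f f' s) (h0 : f s ≠ 0) :
    HasDerivAt (‖f ·‖) (⟪f s, f'⟫ / ‖f s‖) s := by
  have h := hf.norm_sq.sqrt (by positivity)
  simp only [Real.sqrt_sq (norm_nonneg _)] at h
  convert h using 1
  field_simp

theorem hasDerivAt_deriv_norm {f f' : ℝ → F} {f'' : F} {s : ℝ}
    (hf : ∀ᶠ u in 𝓝 s, HasDerivAt f (f' u) u) (hf' : HasDerivAt f' f'' s) (h0 : f s ≠ 0) :
    HasDerivAt (deriv (‖f ·‖))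
      ((⟪f s, f''⟫ + ‖f' s‖ ^ 2 - (⟪f s, f' s⟫ / ‖f s‖) ^ 2) / ‖f s‖) s := by
  have hne : ∀ᶠ u in 𝓝 s, f u ≠ 0 :=
    hf.self_of_nhds.continuousAt.eventually_ne h0
  have hderiv : deriv (‖f ·‖) =ᶠ[𝓝 s] fun u => ⟪f u, f' u⟫ / ‖f u‖ := by
    filter_upwards [hf, hne] with u hu hu0
    exact (hu.norm hu0).deriv
  have h := (hf.self_of_nhds.inner ℝ hf').div (hf.self_of_nhds.norm h0) (norm_ne_zero_iff.2 h0)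
  refine (h.congr_of_eventuallyEq hderiv).congr_deriv ?_
  rw [real_inner_self_eq_norm_sq]
  field_simp

theorem inner_div_norm_le_deriv_deriv_norm {f f' : ℝ → F} {f'' : F} {s : ℝ}
    (hf : ∀ᶠ u in 𝓝 s, HasDerivAt f (f' u) u) (hf' : HasDerivAt f' f'' s) (h0 : f s ≠ 0) :
    DifferentiableAt ℝ (deriv (‖f ·‖)) s ∧ ⟪f s, f''⟫ / ‖f s‖ ≤ deriv (deriv (‖f ·‖)) s := by
  have h := hasDerivAt_deriv_norm hf hf' h0
  refine ⟨h.differentiableAt, h.deriv ▸ ?_⟩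
  have hr : 0 < ‖f s‖ := norm_pos_iff.2 h0
  have hcs : (⟪f s, f' s⟫ / ‖f s‖) ^ 2 ≤ ‖f' s‖ ^ 2 := by
    calc (⟪f s, f' s⟫ / ‖f s‖) ^ 2 = |⟪f s, f' s⟫| ^ 2 / ‖f s‖ ^ 2 := by rw [div_pow, sq_abs]
      _ ≤ (‖f s‖ * ‖f' s‖) ^ 2 / ‖f s‖ ^ 2 := by gcongr; exact abs_real_inner_le_norm _ _
      _ = ‖f' s‖ ^ 2 := by field_simp
  gcongr
  linarith

-- The singular field of the statement is `F(s, x) = ∑ β, coulombField (x - ξ_β(s))`.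
noncomputable def coulombField (x : F) : F := (‖x‖ ^ 2)⁻¹ • x

theorem norm_coulombField (x : F) : ‖coulombField x‖ = ‖x‖⁻¹ := by
  rw [coulombField, norm_smul, norm_inv, norm_pow, norm_norm]
  by_cases hx : ‖x‖ = 0
  · simp [hx]
  · field_simp

theorem inv_norm_le_inner_coulombField_add_div_norm (z a : F) :
    ‖z‖⁻¹ ≤ ⟪z, coulombField z + a⟫ / ‖z‖ + ‖a‖ := by
  rcases eq_or_ne z 0 with rfl | hz
  · simp
  have hr : 0 < ‖z‖ := norm_pos_iff.2 hz
  have hself : ⟪z, coulombField z⟫ = 1 := by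
    rw [coulombField, real_inner_smul_right, real_inner_self_eq_norm_sq]
    field_simp
  have hza : -(‖z‖ * ‖a‖) ≤ ⟪z, a⟫ := (abs_le.1 (abs_real_inner_le_norm z a)).1
  rw [inner_add_right, hself, add_div, ← one_div]
  have : -‖a‖ ≤ ⟪z, a⟫ / ‖z‖ := by rw [le_div_iff₀ hr]; linarith
  linarith

theorem norm_coulombField_sub_le {x y b : F} {M : ℝ} (hM : 0 < M) (hxy : ‖x - y‖ ≤ M / 2)
    (hyb : M ≤ ‖y - b‖) :
    ‖coulombField (x - b) - coulombField (y - b)‖ ≤ 3 / M := by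
  have hxb : M / 2 ≤ ‖x - b‖ := by
    have := norm_sub_norm_le (y - b) (x - b)
    rw [sub_sub_sub_cancel_right, norm_sub_rev y x] at this
    linarith
  calc ‖coulombField (x - b) - coulombField (y - b)‖
      ≤ ‖x - b‖⁻¹ + ‖y - b‖⁻¹ := by
        exact (norm_sub_le _ _).trans_eq (by rw [norm_coulombField, norm_coulombField])
    _ ≤ (M / 2)⁻¹ + M⁻¹ := by gcongr
    _ = 3 / M := by field_simp; norm_num

theorem norm_sum_coulombField_sub_le {ι : Type*} [Fintype ι] [DecidableEq ι] {M : ℝ} (hM : 0 < M)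
    (x : F) (ξ : ι → F) (α : ι) (hx : ‖x - ξ α‖ ≤ M / 2)
    (hsep : ∀ β, β ≠ α → M ≤ ‖ξ α - ξ β‖) :
    ‖∑ β ∈ Finset.univ.erase α, (coulombField (x - ξ β) - coulombField (ξ α - ξ β))‖
      ≤ 3 * Fintype.card ι / M := by
  calc _ ≤ ∑ β ∈ Finset.univ.erase α, 3 / M := by
        refine (norm_sum_le _ _).trans (Finset.sum_le_sum fun β hβ => ?_)
        exact norm_coulombField_sub_le hM hx (hsep β (Finset.ne_of_mem_erase hβ))
    _ ≤ Fintype.card ι * (3 / M) := by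
        rw [Finset.sum_const, nsmul_eq_mul]
        gcongr
        exact Finset.card_erase_le
    _ = 3 * Fintype.card ι / M := by ring

end InnerProductSpace

theorem exists_hasDerivAt_relative_velocity_eq_coulombField_add {N : ℕ} {ε M s : ℝ}
    (hε : 0 < ε) (hM : 0 < M) (α : Fin N) {V w : ℝ → E2} (x : E2) (ξ : Fin N → E2) (eX eξ : E2)
    (hclose : ‖x - ξ α‖ ≤ M / 2) (hsep : ∀ β, β ≠ α → M ≤ ‖ξ α - ξ β‖)
    (hV : HasDerivAt V ((ε ^ 2)⁻¹ • perp (V s) + ε⁻¹ • (eX + ∑ β, coulombField (x - ξ β))) s)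
    (hw : HasDerivAt w ((ε ^ 2)⁻¹ • perp (w s) + ε⁻¹ • eξ +
      ε⁻¹ • ∑ β ∈ Finset.univ.erase α, coulombField (ξ α - ξ β)) s) :
    ∃ A : E2, ‖A‖ ≤ ε⁻¹ * ‖V s - w s‖ + ‖eX‖ + ‖eξ‖ + 3 * N / M ∧
      HasDerivAt (fun u => ε⁻¹ • (V u - w u)) ((ε ^ 2)⁻¹ • (coulombField (x - ξ α) + A)) s := by
  set S := ∑ β ∈ Finset.univ.erase α, (coulombField (x - ξ β) - coulombField (ξ α - ξ β))
  refine ⟨ε⁻¹ • perp (V s - w s) + (eX - eξ) + S, ?_, ?_⟩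
  · have hS : ‖S‖ ≤ 3 * N / M := by
      simpa only [Fintype.card_fin] using norm_sum_coulombField_sub_le hM x ξ α hclose hsep
    calc _ ≤ ‖ε⁻¹ • perp (V s - w s)‖ + ‖eX - eξ‖ + ‖S‖ := norm_add₃_le
      _ ≤ _ := by
        rw [norm_smul, norm_perp, norm_inv, Real.norm_of_nonneg hε.le]
        linarith [norm_sub_le eX eξ]
  · refine ((hV.sub hw).const_smul ε⁻¹).congr_deriv ?_
    rw [← Finset.add_sum_erase _ _ (Finset.mem_univ α), ← perp_sub]
    simp only [S, Finset.sum_sub_distrib]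
    match_scalars <;> field_simp

theorem stmt6_general (ε : ℝ) (hε : 0 < ε) (N : ℕ) (M : ℝ) (hM : 0 < M)
    (α : Fin N) (I : Set ℝ) (hIopen : IsOpen I)
    (X V : ℝ → E2) (ξ η : Fin N → ℝ → E2) (E : ℝ → E2 → E2)
    (hne : ∀ s ∈ I, ∀ β, X s ≠ ξ β s)
    (hsep : ∀ s ∈ I, ∀ β γ, β ≠ γ → M ≤ ‖ξ β s - ξ γ s‖)
    (hX : ∀ s ∈ I, HasDerivAt X (ε⁻¹ • V s) s)
    (hV : ∀ s ∈ I, HasDerivAt V ((ε ^ 2)⁻¹ • perp (V s) +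
        ε⁻¹ • (E s (X s) + ∑ β, (‖X s - ξ β s‖ ^ 2)⁻¹ • (X s - ξ β s))) s)
    (hξ : ∀ β, ∀ s ∈ I, HasDerivAt (ξ β) (ε⁻¹ • η β s) s)
    (hη : ∀ s ∈ I, HasDerivAt (η α) ((ε ^ 2)⁻¹ • perp (η α s) + ε⁻¹ • E s (ξ α s) +
        ε⁻¹ • ∑ β ∈ Finset.univ.erase α, (‖ξ α s - ξ β s‖ ^ 2)⁻¹ • (ξ α s - ξ β s)) s) :
    ∀ s ∈ I, ‖X s - ξ α s‖ ≤ M / 2 →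
      DifferentiableAt ℝ (fun u => ‖X u - ξ α u‖) s ∧
      DifferentiableAt ℝ (deriv fun u => ‖X u - ξ α u‖) s ∧
      (‖X s - ξ α s‖)⁻¹
        ≤ ε ^ 2 * deriv (deriv fun u => ‖X u - ξ α u‖) s
          + ε⁻¹ * ‖V s - η α s‖ + ‖E s (X s)‖ + ‖E s (ξ α s)‖ + 3 * N / M := by
  intro s hs hclose
  have hZ : ∀ᶠ u in 𝓝 s, HasDerivAt (fun u => X u - ξ α u) (ε⁻¹ • (V u - η α u)) u := by
    filter_upwards [hIopen.mem_nhds hs] with u hu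
    rw [smul_sub]
    exact (hX u hu).sub (hξ α u hu)
  have hZs : X s - ξ α s ≠ 0 := sub_ne_zero.2 (hne s hs α)
  obtain ⟨A, hA, hW⟩ := exists_hasDerivAt_relative_velocity_eq_coulombField_add hε hM α
    (X s) (fun β => ξ β s) _ _ hclose (fun β hβ => hsep s hs α β hβ.symm) (hV s hs) (hη s hs)
  obtain ⟨hd2, hlow⟩ := inner_div_norm_le_deriv_deriv_norm hZ hW hZs
  refine ⟨(hZ.self_of_nhds.norm hZs).differentiableAt, hd2, ?_⟩
  calc ‖X s - ξ α s‖⁻¹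
      ≤ ⟪X s - ξ α s, coulombField (X s - ξ α s) + A⟫ / ‖X s - ξ α s‖ + ‖A‖ :=
        inv_norm_le_inner_coulombField_add_div_norm _ _
    _ = ε ^ 2 * (⟪X s - ξ α s, (ε ^ 2)⁻¹ • (coulombField (X s - ξ α s) + A)⟫ /
          ‖X s - ξ α s‖) + ‖A‖ := by
        rw [real_inner_smul_right]
        field_simp
    _ ≤ _ := by
        nlinarith [mul_le_mul_of_nonneg_left hlow (sq_nonneg ε)]

/-- Along a characteristic trajectory `(X, V)` of the magnetized
Vlasov–Poisson system with `N` point charges `ξ_β` (pairwise at distance `≥ M`,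
never equal to `X`), at any time `s` in the open interval `I` with
`|X(s) − ξ_α(s)| ≤ M/2`, the function `r(s) = |X(s) − ξ_α(s)|` is twice
differentiable at `s` and
`1/|X−ξ_α| ≤ ε² r″ + ε⁻¹|V−η_α| + |E(s,X)| + |E(s,ξ_α)| + 3N/M`. -/
theorem stmt6 (ε : ℝ) (hε : 0 < ε) (N : ℕ) (hN : 1 ≤ N) (M : ℝ) (hM : 0 < M)
    (α : Fin N) (I : Set ℝ) (hIopen : IsOpen I) (hIconn : I.OrdConnected)
    (X V : ℝ → E2) (ξ η : Fin N → ℝ → E2) (E : ℝ → E2 → E2)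
    (hne : ∀ s ∈ I, ∀ β, X s ≠ ξ β s)
    (hsep : ∀ s ∈ I, ∀ β γ, β ≠ γ → M ≤ ‖ξ β s - ξ γ s‖)
    (hX : ∀ s ∈ I, HasDerivAt X (ε⁻¹ • V s) s)
    (hV : ∀ s ∈ I, HasDerivAt V ((ε ^ 2)⁻¹ • perp (V s) +
        ε⁻¹ • (E s (X s) + ∑ β, (‖X s - ξ β s‖ ^ 2)⁻¹ • (X s - ξ β s))) s)
    (hξ : ∀ β, ∀ s ∈ I, HasDerivAt (ξ β) (ε⁻¹ • η β s) s)
    (hη : ∀ s ∈ I, HasDerivAt (η α) ((ε ^ 2)⁻¹ • perp (η α s) + ε⁻¹ • E s (ξ α s) +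
        ε⁻¹ • ∑ β ∈ Finset.univ.erase α, (‖ξ α s - ξ β s‖ ^ 2)⁻¹ • (ξ α s - ξ β s)) s) :
    ∀ s ∈ I, ‖X s - ξ α s‖ ≤ M / 2 →
      DifferentiableAt ℝ (fun u => ‖X u - ξ α u‖) s ∧
      DifferentiableAt ℝ (deriv fun u => ‖X u - ξ α u‖) s ∧
      (‖X s - ξ α s‖)⁻¹
        ≤ ε ^ 2 * deriv (deriv fun u => ‖X u - ξ α u‖) s
          + ε⁻¹ * ‖V s - η α s‖ + ‖E s (X s)‖ + ‖E s (ξ α s)‖ + 3 * N / M :=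
  stmt6_general ε hε N M hM α I hIopen X V ξ η E hne hsep hX hV hξ hη
end

section
/- Let ε > 0, N ≥ 1 an integer, K > 1, C₀ > 0, and let I ⊂ ℝ be an open interval. Let X, V, ξ₁,…,ξ_N, η₁,…,η_N : I → ℝ² be differentiable and E : I×ℝ² → ℝ² a map such that for all s ∈ I: X(s) ≠ ξ_β(s) for every β; |η_β(s)| ≤ C₀ for every β; X′(s) = V(s)/ε; V′(s) = V(s)^⊥/ε² + (1/ε)( E(s,X(s)) + Σ_{β=1}^N (X(s)−ξ_β(s))/|X(s)−ξ_β(s)|² ); and ξ_β′(s) = η_β(s)/ε for every β. Define the pointwise energy h(s) = |V(s)|²/2 + Σ_{β=1}^N ( |X(s)−ξ_β(s)| − ln|X(s)−ξ_β(s)| ) + K. Then h is differentiable on I and there exists a constant C > 0, depending only on N and C₀, such that for all s ∈ I: |h′(s)| ≤ C ε^{-1} ( √(h(s)) ( |E(s,X(s))| + 1 ) + Σ_{β=1}^N 1/|X(s)−ξ_β(s)| ). -/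
/-!
Differentiating `h` along the trajectory, the magnetic force `V^⊥/ε²` does no work and the
singular Coulomb force `(X - ξ)/|X - ξ|²` cancels exactly against the `-ln|X - ξ|` part of the
potential. What remains of charge `β` is `ε⁻¹ ⟪u, V - (1 - r⁻¹) η_β⟫` with `u` the unit vector
along `X - ξ_β` and `r = |X - ξ_β|`, which is at most `ε⁻¹ (|V| + C₀ (1 + r⁻¹))`. Since every
term `r - ln r` of `h` is at least `1`, both `1` and `|V|` are `O(√h)`.
-/

open MeasureTheory Real Filter
open scoped ENNReal Topology
open scoped RealInnerProductSpace

lemma inner_perp_self (a : E2) : ⟪a, perp a⟫ = 0 := by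
  simp only [perp, WithLp.equiv_symm_apply, PiLp.inner_apply, RCLike.inner_apply, ringHom_apply,
    Fin.sum_univ_two, Matrix.cons_val_zero, Matrix.cons_val_one, Matrix.cons_val_fin_one]
  ring

lemma Real.one_le_sub_log {r : ℝ} (hr : 0 < r) : 1 ≤ r - log r := by
  linarith [log_le_sub_one_of_pos hr]

section InnerProductSpace

variable {F : Type*} [NormedAddCommGroup F] [InnerProductSpace ℝ F]

lemma HasDerivAt.norm_s7 {f : ℝ → F} {f' : F} {x : ℝ} (hf : HasDerivAt f f' x) (h0 : f x ≠ 0) :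
    HasDerivAt (fun u => ‖f u‖) (‖f x‖⁻¹ * ⟪f x, f'⟫) x := by
  have hsqrt := (hasDerivAt_sqrt (by positivity)).comp x hf.norm_sq
  simp only [Function.comp_def, sqrt_sq (norm_nonneg _)] at hsqrt
  exact hsqrt.congr_deriv (by field_simp)

lemma HasDerivAt.norm_sub_log_norm {f : ℝ → F} {f' : F} {x : ℝ} (hf : HasDerivAt f f' x)
    (h0 : f x ≠ 0) :
    HasDerivAt (fun u => ‖f u‖ - Real.log ‖f u‖) ((1 - ‖f x‖⁻¹) * (‖f x‖⁻¹ * ⟪f x, f'⟫)) x := by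
  have hnorm := hf.norm_s7 h0
  exact (hnorm.sub (hnorm.log (norm_ne_zero_iff.mpr h0))).congr_deriv (by ring)

-- The singular terms `‖w‖⁻² ⟪w, v⟫` cancel.
lemma inner_coulomb_add_rate_norm_sub_log (w v η : F) :
    ⟪v, (‖w‖ ^ 2)⁻¹ • w⟫ + (1 - ‖w‖⁻¹) * (‖w‖⁻¹ * ⟪w, v - η⟫)
      = ‖w‖⁻¹ * ⟪w, v - (1 - ‖w‖⁻¹) • η⟫ := by
  simp only [real_inner_smul_right, inner_sub_right, real_inner_comm w v]
  ring

lemma abs_inv_norm_mul_inner_le (w u : F) : |‖w‖⁻¹ * ⟪w, u⟫| ≤ ‖u‖ := by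
  rcases eq_or_ne w 0 with rfl | hw
  · simp
  rw [abs_mul, abs_of_nonneg (by positivity), inv_mul_le_iff₀ (norm_pos_iff.mpr hw)]
  exact abs_real_inner_le_norm w u

lemma abs_inv_norm_mul_inner_sub_smul_le (w v η : F) :
    |‖w‖⁻¹ * ⟪w, v - (1 - ‖w‖⁻¹) • η⟫| ≤ ‖v‖ + ‖η‖ * (1 + ‖w‖⁻¹) := by
  have hcoef : |1 - ‖w‖⁻¹| ≤ 1 + ‖w‖⁻¹ := by
    rw [abs_le]; constructor <;> linarith [inv_nonneg.mpr (norm_nonneg w)]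
  calc |‖w‖⁻¹ * ⟪w, v - (1 - ‖w‖⁻¹) • η⟫|
      ≤ ‖v - (1 - ‖w‖⁻¹) • η‖ := abs_inv_norm_mul_inner_le w _
    _ ≤ ‖v‖ + |1 - ‖w‖⁻¹| * ‖η‖ := by
      grw [norm_sub_le, norm_smul, Real.norm_eq_abs]
    _ ≤ ‖v‖ + ‖η‖ * (1 + ‖w‖⁻¹) := by
      rw [mul_comm]; gcongr

lemma hasDerivAt_energy {ι : Type*} [Fintype ι] {X V : ℝ → F} {ξ η : ι → ℝ → F} {B e : F}
    {ε K s : ℝ} (hne : ∀ β, X s ≠ ξ β s) (hX : HasDerivAt X (ε⁻¹ • V s) s)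
    (hV : HasDerivAt V (B + ε⁻¹ • (e + ∑ β, (‖X s - ξ β s‖ ^ 2)⁻¹ • (X s - ξ β s))) s)
    (hB : ⟪V s, B⟫ = 0) (hξ : ∀ β, HasDerivAt (ξ β) (ε⁻¹ • η β s) s) :
    HasDerivAt (fun u => ‖V u‖ ^ 2 / 2
        + (∑ β, (‖X u - ξ β u‖ - Real.log ‖X u - ξ β u‖)) + K)
      (ε⁻¹ * (⟪V s, e⟫ + ∑ β, ‖X s - ξ β s‖⁻¹
        * ⟪X s - ξ β s, V s - (1 - ‖X s - ξ β s‖⁻¹) • η β s⟫)) s := by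
  have hkin := hV.norm_sq.div_const 2
  have hpot : ∀ β, HasDerivAt (fun u => ‖X u - ξ β u‖ - Real.log ‖X u - ξ β u‖)
      (ε⁻¹ * ((1 - ‖X s - ξ β s‖⁻¹) * (‖X s - ξ β s‖⁻¹ * ⟪X s - ξ β s, V s - η β s⟫))) s :=
    fun β => ((smul_sub ε⁻¹ (V s) (η β s) ▸ hX.fun_sub (hξ β)).norm_sub_log_norm
      (sub_ne_zero.mpr (hne β))).congr_deriv (by rw [real_inner_smul_right]; ring)
  refine ((hkin.add (HasDerivAt.fun_sum fun β _ => hpot β)).add_const K).congr_deriv ?_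
  simp only [inner_add_right, hB, real_inner_smul_right, inner_sum,
    ← inner_coulomb_add_rate_norm_sub_log]
  rw [← Finset.mul_sum, Finset.sum_add_distrib]
  ring

lemma abs_inner_add_sum_inv_norm_mul_inner_le {ι : Type*} [Fintype ι] (v e : F) (w η : ι → F)
    {C₀ : ℝ} (hη : ∀ β, ‖η β‖ ≤ C₀) :
    |⟪v, e⟫ + ∑ β, ‖w β‖⁻¹ * ⟪w β, v - (1 - ‖w β‖⁻¹) • η β⟫|
      ≤ ‖v‖ * ‖e‖ + (Fintype.card ι * (‖v‖ + C₀) + C₀ * ∑ β, ‖w β‖⁻¹) := by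
  refine (abs_add_le _ _).trans (add_le_add (abs_real_inner_le_norm _ _) ?_)
  calc _ ≤ ∑ β, |‖w β‖⁻¹ * ⟪w β, v - (1 - ‖w β‖⁻¹) • η β⟫| := Finset.abs_sum_le_sum_abs _ _
    _ ≤ ∑ β, (‖v‖ + C₀ * (1 + ‖w β‖⁻¹)) := by
      gcongr with β
      exact (abs_inv_norm_mul_inner_sub_smul_le _ _ _).trans (by gcongr; exact hη β)
    _ = _ := by
      simp only [Finset.sum_add_distrib, mul_add, ← Finset.mul_sum, Finset.sum_const,
        Finset.card_univ, nsmul_eq_mul, mul_one]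
      ring

end InnerProductSpace

lemma add_le_mul_sqrt_of_sq_div_two_add_one_le {a q c t n h : ℝ} (hq : 0 ≤ q) (hc : 0 ≤ c)
    (ht : 0 ≤ t) (hn : 0 ≤ n) (hh : a ^ 2 / 2 + 1 ≤ h) :
    a * q + (n * (a + c) + c * t) ≤ (n + 1) * (c + 2) * (√h * (q + 1) + t) := by
  have h1 : 1 ≤ √h := one_le_sqrt.mpr (by linarith [sq_nonneg a])
  have ha2 : a ≤ 2 * √h := by
    refine le_of_sq_le_sq ?_ (by positivity)
    rw [mul_pow, sq_sqrt (by linarith [sq_nonneg a])]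
    linarith [sq_nonneg a]
  calc _ ≤ 2 * √h * q + (n * (2 * √h + c * √h) + c * t) := by
        gcongr
        exact le_mul_of_one_le_right hc h1
    _ ≤ _ := by
      have := mul_nonneg (mul_nonneg (sqrt_nonneg h) hq) (by positivity : 0 ≤ n * (c + 2) + c)
      have := mul_nonneg (sqrt_nonneg h) (by positivity : 0 ≤ c + 2)
      have := mul_nonneg ht (by positivity : 0 ≤ n * (c + 2) + 2)
      linarith

theorem stmt7_general (N : ℕ) (C₀ : ℝ) (hC₀ : 0 < C₀) :
    ∃ C : ℝ, 0 < C ∧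
      ∀ (ε : ℝ), 0 < ε → ∀ (K : ℝ), 1 < K →
      ∀ (I : Set ℝ), IsOpen I → I.OrdConnected →
      ∀ (X V : ℝ → E2) (ξ η : Fin N → ℝ → E2) (E : ℝ → E2 → E2),
      (∀ s ∈ I, ∀ β, X s ≠ ξ β s) →
      (∀ s ∈ I, ∀ β, ‖η β s‖ ≤ C₀) →
      (∀ s ∈ I, HasDerivAt X (ε⁻¹ • V s) s) →
      (∀ s ∈ I, HasDerivAt V ((ε ^ 2)⁻¹ • perp (V s) +
          ε⁻¹ • (E s (X s) + ∑ β, (‖X s - ξ β s‖ ^ 2)⁻¹ • (X s - ξ β s))) s) →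
      (∀ β, ∀ s ∈ I, HasDerivAt (ξ β) (ε⁻¹ • η β s) s) →
      ∀ s ∈ I, ∃ d : ℝ,
        HasDerivAt (fun u => ‖V u‖ ^ 2 / 2
            + (∑ β, (‖X u - ξ β u‖ - Real.log ‖X u - ξ β u‖)) + K) d s ∧
        |d| ≤ C * ε⁻¹ *
            (Real.sqrt (‖V s‖ ^ 2 / 2
                + (∑ β, (‖X s - ξ β s‖ - Real.log ‖X s - ξ β s‖)) + K)
              * (‖E s (X s)‖ + 1)
            + ∑ β, (‖X s - ξ β s‖)⁻¹) := by
  refine ⟨(N + 1) * (C₀ + 2), by positivity, ?_⟩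
  intro ε hε K hK I _ _ X V ξ η E hne hη hX hV hξ s hs
  refine ⟨_, hasDerivAt_energy (hne s hs) (hX s hs) (hV s hs)
    (by rw [real_inner_smul_right, inner_perp_self, mul_zero]) fun β => hξ β s hs, ?_⟩
  have hpot : 0 ≤ ∑ β, (‖X s - ξ β s‖ - Real.log ‖X s - ξ β s‖) :=
    Finset.sum_nonneg fun β _ => zero_le_one.trans
      (one_le_sub_log (norm_pos_iff.mpr (sub_ne_zero.mpr (hne s hs β))))
  rw [abs_mul, abs_of_pos (inv_pos.mpr hε), mul_comm _ ε⁻¹, mul_assoc]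
  gcongr ε⁻¹ * ?_
  have hrate := abs_inner_add_sum_inv_norm_mul_inner_le (V s) (E s (X s))
    (fun β => X s - ξ β s) (fun β => η β s) (hη s hs)
  rw [Fintype.card_fin] at hrate
  exact hrate.trans (add_le_mul_sqrt_of_sq_div_two_add_one_le (norm_nonneg _) hC₀.le
    (by positivity) N.cast_nonneg (by linarith))

/-- For `N ≥ 1` and `C₀ > 0` there is a constant `C > 0`, depending
only on `N` and `C₀`, such that along any characteristic trajectory `(X, V)` of the
magnetized Vlasov–Poisson system with `N` point charges `ξ_β` of velocities
`|η_β| ≤ C₀`, the pointwise energy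
`h(s) = |V(s)|²/2 + Σ_β(|X(s)−ξ_β(s)| − ln|X(s)−ξ_β(s)|) + K` is differentiable with
`|h′(s)| ≤ C ε⁻¹ ( √h(s) (|E(s,X(s))| + 1) + Σ_β 1/|X(s)−ξ_β(s)| )`. -/
theorem stmt7 (N : ℕ) (hN : 1 ≤ N) (C₀ : ℝ) (hC₀ : 0 < C₀) :
    ∃ C : ℝ, 0 < C ∧
      ∀ (ε : ℝ), 0 < ε → ∀ (K : ℝ), 1 < K →
      ∀ (I : Set ℝ), IsOpen I → I.OrdConnected →
      ∀ (X V : ℝ → E2) (ξ η : Fin N → ℝ → E2) (E : ℝ → E2 → E2),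
      (∀ s ∈ I, ∀ β, X s ≠ ξ β s) →
      (∀ s ∈ I, ∀ β, ‖η β s‖ ≤ C₀) →
      (∀ s ∈ I, HasDerivAt X (ε⁻¹ • V s) s) →
      (∀ s ∈ I, HasDerivAt V ((ε ^ 2)⁻¹ • perp (V s) +
          ε⁻¹ • (E s (X s) + ∑ β, (‖X s - ξ β s‖ ^ 2)⁻¹ • (X s - ξ β s))) s) →
      (∀ β, ∀ s ∈ I, HasDerivAt (ξ β) (ε⁻¹ • η β s) s) →
      ∀ s ∈ I, ∃ d : ℝ,
        HasDerivAt (fun u => ‖V u‖ ^ 2 / 2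
            + (∑ β, (‖X u - ξ β u‖ - Real.log ‖X u - ξ β u‖)) + K) d s ∧
        |d| ≤ C * ε⁻¹ *
            (Real.sqrt (‖V s‖ ^ 2 / 2
                + (∑ β, (‖X s - ξ β s‖ - Real.log ‖X s - ξ β s‖)) + K)
              * (‖E s (X s)‖ + 1)
            + ∑ β, (‖X s - ξ β s‖)⁻¹) :=
  stmt7_general N C₀ hC₀
end

section
/- Let N ≥ 1 be an integer, C ≥ 1, C̃ ≥ 1, T > 0, ε ∈ (0,1), and A ≥ 0 with A ≤ C ε^{-2}. Let L₀, L₁ : [0,T] → [0,∞) be functions such that for every t ∈ [0,T] and every σ > 0, R > 0: L₀(t) ≤ N σ^{-1} t + N R^{-1/2} L₁(t) + 8π² N A R σ t, and L₁(t) ≤ C̃ ( t ε^{-1} + ε + L₀(t) + A^{1/2} t ). Then there exist constants C′ > 0 and t₀ > 0, depending only on N, C, C̃, such that L₀(t) ≤ C′ ( ε^{-1} t + ε ) for all t ∈ [0,T], and L₀(t) ≤ C′ t^{1/2} ε^{-1} for all t ∈ (0, min(t₀,T)]. -/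
open MeasureTheory Real Filter
open scoped ENNReal Topology

lemma sq_rpow_neg_half {a : ℝ} (ha : 0 < a) : (a ^ 2) ^ (-(1 / 2) : ℝ) = a⁻¹ := by
  rw [← Real.rpow_natCast a 2, ← Real.rpow_mul ha.le]
  norm_num
  rw [Real.rpow_neg_one]

set_option maxHeartbeats 1600000 in
/-- Given `N ≥ 1`, `C ≥ 1`, `C̃ ≥ 1`, there exist `C′ > 0` and `t₀ > 0`
depending only on `N, C, C̃` such that: whenever `T > 0`, `ε ∈ (0,1)`, `0 ≤ A ≤ C ε⁻²`
and `L₀, L₁ : [0,T] → [0,∞)` satisfy, for all `t ∈ [0,T]`, `σ, R > 0`,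
`L₀(t) ≤ N σ⁻¹ t + N R^{-1/2} L₁(t) + 8π² N A R σ t` and
`L₁(t) ≤ C̃ (t ε⁻¹ + ε + L₀(t) + A^{1/2} t)`, then `L₀(t) ≤ C′(ε⁻¹ t + ε)` on `[0,T]`
and `L₀(t) ≤ C′ t^{1/2} ε⁻¹` on `(0, min(t₀,T)]`. -/
theorem stmt9 (N : ℕ) (hN : 1 ≤ N) (C Ct : ℝ) (hC : 1 ≤ C) (hCt : 1 ≤ Ct) :
    ∃ C' t₀ : ℝ, 0 < C' ∧ 0 < t₀ ∧
      ∀ (T ε A : ℝ) (L₀ L₁ : ℝ → ℝ),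
        0 < T → 0 < ε → ε < 1 → 0 ≤ A → A ≤ C * ε⁻¹ ^ 2 →
        (∀ t ∈ Set.Icc (0 : ℝ) T, 0 ≤ L₀ t) →
        (∀ t ∈ Set.Icc (0 : ℝ) T, 0 ≤ L₁ t) →
        (∀ t ∈ Set.Icc (0 : ℝ) T, ∀ σ R : ℝ, 0 < σ → 0 < R →
          L₀ t ≤ N * σ⁻¹ * t + N * R ^ (-(1 / 2) : ℝ) * L₁ t
            + 8 * π ^ 2 * N * A * R * σ * t) →
        (∀ t ∈ Set.Icc (0 : ℝ) T,
          L₁ t ≤ Ct * (t * ε⁻¹ + ε + L₀ t + Real.sqrt A * t)) →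
        (∀ t ∈ Set.Icc (0 : ℝ) T, L₀ t ≤ C' * (ε⁻¹ * t + ε)) ∧
        (∀ t : ℝ, 0 < t → t ≤ min t₀ T → L₀ t ≤ C' * Real.sqrt t * ε⁻¹) := by
  have hNpos : (0 : ℝ) < N := by exact_mod_cast Nat.lt_of_lt_of_le Nat.zero_lt_one hN
  have hN1 : (1 : ℝ) ≤ N := by exact_mod_cast hN
  have hCt0 : (0 : ℝ) < Ct := by linarith
  have hC0 : (0 : ℝ) < C := by linarith
  have hπ2 : (0 : ℝ) < π ^ 2 := by positivity
  set K : ℝ := π ^ 2 * (N : ℝ) ^ 3 * C * Ct ^ 2 with hK_def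
  have hK : 0 ≤ K := by
    apply mul_nonneg (mul_nonneg (mul_nonneg hπ2.le (by positivity)) hC0.le) (sq_nonneg Ct)
  refine ⟨2 * (2 * (N : ℝ) + 2 + C + 72 * K), 1 / 4, by nlinarith, by norm_num, ?_⟩
  intro T ε A L₀ L₁ hT hε hε1 hA hA2 hL0nn hL1nn hsplit hmom
  have hεinv : (0 : ℝ) < ε⁻¹ := inv_pos.2 hε
  have hεe : ε * ε⁻¹ = 1 := mul_inv_cancel₀ hε.ne'
  have he1 : (1 : ℝ) ≤ ε⁻¹ := by nlinarith
  have hsA : Real.sqrt A ≤ C * ε⁻¹ := by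
    have h1 : Real.sqrt A ≤ Real.sqrt ((C * ε⁻¹) ^ 2) := by
      apply Real.sqrt_le_sqrt
      nlinarith [sq_nonneg ε⁻¹, mul_nonneg (by linarith : (0:ℝ) ≤ C - 1) (sq_nonneg ε⁻¹)]
    rwa [Real.sqrt_sq (by positivity)] at h1
  have hAε : A * ε ≤ C * ε⁻¹ := by
    have h4 : A * ε ≤ C * ε⁻¹ ^ 2 * ε := mul_le_mul_of_nonneg_right hA2 hε.le
    have h5 : C * ε⁻¹ ^ 2 * ε = C * ε⁻¹ := by
      field_simp
    linarith
  constructor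
  · -- Part 1
    intro t ht
    have h1 := hsplit t ht ε ((2 * (N : ℝ) * Ct) ^ 2) hε
      (pow_pos (by positivity) 2)
    rw [sq_rpow_neg_half (by positivity : (0:ℝ) < 2 * (N : ℝ) * Ct)] at h1
    have e2 : (N : ℝ) * (2 * (N : ℝ) * Ct)⁻¹ = (2 * Ct)⁻¹ := by
      field_simp
    rw [e2] at h1
    have h2 := hmom t ht
    have hL1b : (2 * Ct)⁻¹ * L₁ t
        ≤ (t * ε⁻¹ + ε + L₀ t + Real.sqrt A * t) / 2 := by
      have h3 := mul_le_mul_of_nonneg_left h2 (by positivity : (0:ℝ) ≤ (2 * Ct)⁻¹)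
      have h4 : (2 * Ct)⁻¹ * (Ct * (t * ε⁻¹ + ε + L₀ t + Real.sqrt A * t))
          = (t * ε⁻¹ + ε + L₀ t + Real.sqrt A * t) / 2 := by
        field_simp
      linarith
    have hsAt : Real.sqrt A * t ≤ C * ε⁻¹ * t := mul_le_mul_of_nonneg_right hsA ht.1
    have het : (0 : ℝ) ≤ ε⁻¹ * t := mul_nonneg hεinv.le ht.1
    have hterm : 8 * π ^ 2 * (N : ℝ) * A * (2 * (N : ℝ) * Ct) ^ 2 * ε * t
        ≤ 32 * K * (ε⁻¹ * t) := by
      have h4 : A * ε * t ≤ C * ε⁻¹ * t :=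
        mul_le_mul_of_nonneg_right hAε ht.1
      have h5 := mul_le_mul_of_nonneg_left h4
        (by positivity : (0:ℝ) ≤ 32 * π ^ 2 * (N : ℝ) ^ 3 * Ct ^ 2)
      nlinarith [h5]
    have hgap := mul_nonneg
      (by linarith : (0:ℝ) ≤ 2 * (2 * (N : ℝ) + 2 + C + 72 * K) - (2 * (N:ℝ) + 1 + C + 64 * K))
      het
    have hεgap := mul_nonneg
      (by linarith : (0:ℝ) ≤ 2 * (2 * (N : ℝ) + 2 + C + 72 * K) - 1) hε.le
    linarith [h1, hL1b, hsAt, hterm, hgap, hεgap]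
  · -- Part 2
    intro t htpos htmin
    have htT : t ≤ T := le_trans htmin (min_le_right _ _)
    have ht4 : t ≤ 1 / 4 := le_trans htmin (min_le_left _ _)
    have ht : t ∈ Set.Icc (0 : ℝ) T := ⟨htpos.le, htT⟩
    set s : ℝ := Real.sqrt t with hs_def
    have hs2 : s ^ 2 = t := Real.sq_sqrt htpos.le
    have hspos : 0 < s := Real.sqrt_pos.2 htpos
    have hs12 : s ≤ 1 / 2 := by
      have h0 : Real.sqrt (1 / 4 : ℝ) = 1 / 2 := by
        rw [show (1 / 4 : ℝ) = (1 / 2) ^ 2 by norm_num, Real.sqrt_sq (by norm_num : (0:ℝ) ≤ 1/2)]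
      calc s ≤ Real.sqrt (1 / 4) := Real.sqrt_le_sqrt ht4
        _ = 1 / 2 := h0
    have hb : (0 : ℝ) < (N : ℝ) * Ct / s := by positivity
    have h1 := hsplit t ht (ε * s) (((N : ℝ) * Ct / s) ^ 2) (mul_pos hε hspos)
      (pow_pos hb 2)
    rw [sq_rpow_neg_half hb] at h1
    have e1 : (N : ℝ) * (ε * s)⁻¹ * t = (N : ℝ) * ε⁻¹ * s := by
      rw [← hs2]; field_simp
    have e2 : (N : ℝ) * ((N : ℝ) * Ct / s)⁻¹ = s / Ct := by
      field_simp
    have e3 : 8 * π ^ 2 * (N : ℝ) * A * ((N : ℝ) * Ct / s) ^ 2 * (ε * s) * t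
        = 8 * π ^ 2 * (N : ℝ) ^ 3 * Ct ^ 2 * (A * ε) * s := by
      rw [← hs2]; field_simp
    rw [e1, e2, e3] at h1
    have h2 := hmom t ht
    have hL0 := hL0nn t ht
    have hL1b : s / Ct * L₁ t ≤ s * (t * ε⁻¹ + ε + L₀ t + Real.sqrt A * t) := by
      have h3 := mul_le_mul_of_nonneg_left h2 (by positivity : (0:ℝ) ≤ s / Ct)
      have h4 : s / Ct * (Ct * (t * ε⁻¹ + ε + L₀ t + Real.sqrt A * t))
          = s * (t * ε⁻¹ + ε + L₀ t + Real.sqrt A * t) := by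
        field_simp
      linarith
    have hse : (0 : ℝ) ≤ s * ε⁻¹ := mul_nonneg hspos.le hεinv.le
    -- bound the pieces of s * (...)
    have hste : s * (t * ε⁻¹) ≤ s * ε⁻¹ := by nlinarith
    have hsε : s * ε ≤ s * ε⁻¹ := by nlinarith
    have hsL : s * L₀ t ≤ (1 / 2) * L₀ t := by nlinarith
    have h6 : Real.sqrt A * t ≤ C * ε⁻¹ := by
      nlinarith [Real.sqrt_nonneg A, hsA, mul_nonneg hC0.le hεinv.le]
    have hssAt : s * (Real.sqrt A * t) ≤ s * (C * ε⁻¹) :=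
      mul_le_mul_of_nonneg_left h6 hspos.le
    have hterm : 8 * π ^ 2 * (N : ℝ) ^ 3 * Ct ^ 2 * (A * ε) * s ≤ 8 * K * (s * ε⁻¹) := by
      have h5 := mul_le_mul_of_nonneg_left hAε
        (by positivity : (0:ℝ) ≤ 8 * π ^ 2 * (N : ℝ) ^ 3 * Ct ^ 2)
      nlinarith [mul_le_mul_of_nonneg_right h5 hspos.le]
    have hgap := mul_nonneg
      (by linarith : (0:ℝ) ≤ 2 * (2 * (N : ℝ) + 2 + C + 72 * K) - 2 * ((N:ℝ) + 2 + C + 8 * K))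
      hse
    linarith [h1, hL1b, hste, hsε, hsL, hssAt, hterm, hgap]
end

section
/- Let N ≥ 1 be an integer, T > 0, M > 0, C̃ ≥ 1, and K̃ > 2 with 4C̃K̃^{-4} < M and 8K̃^{-1} < M, and let 0 < ε < K̃^{-8}. Let ξ₁,…,ξ_N : [0,T] → ℝ² satisfy: (i) |ξ_α(t) − ξ_β(t)| ≥ M for all t ∈ [0,T] and all α ≠ β; (ii) |ξ_α(t) − ξ_α(s)| ≤ C̃ (t−s)/ε for all 0 ≤ s ≤ t ≤ T and all α; (iii) max_{1≤α≤N} min_{1≤β≤N} |ξ_α(t) − ξ_β(s)| ≤ K̃ √(t−s+ε) whenever 0 ≤ s < t ≤ T and t − s ≤ K̃^{-4}. Then for every α and all 0 ≤ s < t ≤ T with t − s ≤ K̃^{-4}: |ξ_α(t) − ξ_α(s)| ≤ K̃ √(t−s+ε). -/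
open MeasureTheory Real Filter
open scoped ENNReal Topology

/-- **bootstrap to individual continuity.** If the point-charge
trajectories `ξ_α` are pairwise separated by `M`, `ε`-Lipschitz with constant `C̃/ε`,
and each `ξ_α(t)` is close to *some* `ξ_β(s)` at scale `K̃ √(t−s+ε)` for
`t − s ≤ K̃⁻⁴`, then (under the compatibility conditions `4C̃K̃⁻⁴ < M`, `8K̃⁻¹ < M`,
`0 < ε < K̃⁻⁸`) each individual trajectory satisfies
`|ξ_α(t) − ξ_α(s)| ≤ K̃ √(t−s+ε)` for `t − s ≤ K̃⁻⁴`. -/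
theorem stmt11 (N : ℕ) (hN : 1 ≤ N) (T M Ct Kt : ℝ) (hT : 0 < T) (hM : 0 < M)
    (hCt : 1 ≤ Ct) (hKt : 2 < Kt)
    (hcomp1 : 4 * Ct * (Kt ^ 4)⁻¹ < M) (hcomp2 : 8 * Kt⁻¹ < M)
    (ε : ℝ) (hε0 : 0 < ε) (hε1 : ε < (Kt ^ 8)⁻¹)
    (ξ : Fin N → ℝ → E2)
    (hsep : ∀ t ∈ Set.Icc (0 : ℝ) T, ∀ α β, α ≠ β → M ≤ ‖ξ α t - ξ β t‖)
    (hlip : ∀ α, ∀ s t : ℝ, 0 ≤ s → s ≤ t → t ≤ T →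
      ‖ξ α t - ξ α s‖ ≤ Ct * (t - s) / ε)
    (hqc : ∀ s t : ℝ, 0 ≤ s → s < t → t ≤ T → t - s ≤ (Kt ^ 4)⁻¹ →
      ∀ α, ∃ β, ‖ξ α t - ξ β s‖ ≤ Kt * Real.sqrt (t - s + ε)) :
    ∀ α, ∀ s t : ℝ, 0 ≤ s → s < t → t ≤ T → t - s ≤ (Kt ^ 4)⁻¹ →
      ‖ξ α t - ξ α s‖ ≤ Kt * Real.sqrt (t - s + ε) := by
  have hK0 : (0 : ℝ) < Kt := by linarith
  have hK40 : (0 : ℝ) < Kt ^ 4 := by positivity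
  have hK80 : (0 : ℝ) < Kt ^ 8 := by positivity
  have hεK4 : ε ≤ (Kt ^ 4)⁻¹ := by
    have h48 : Kt ^ 4 ≤ Kt ^ 8 := by
      have : (1:ℝ) ≤ Kt := by linarith
      exact pow_le_pow_right₀ this (by norm_num)
    have := inv_anti₀ hK40 h48
    linarith
  -- bound on the sqrt term
  have hsqrt : ∀ x : ℝ, 0 ≤ x → x ≤ (Kt ^ 4)⁻¹ →
      Kt * Real.sqrt (x + ε) ≤ 2 / Kt := by
    intro x hx hx'
    have h1 : x + ε ≤ (2 / Kt ^ 2) ^ 2 := by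
      have h2 : (2 / Kt ^ 2) ^ 2 = 4 * (Kt ^ 4)⁻¹ := by
        field_simp; ring
      rw [h2]; linarith
    have h4 : Real.sqrt (x + ε) ≤ 2 / Kt ^ 2 := by
      have := Real.sqrt_le_sqrt h1
      rwa [Real.sqrt_sq (by positivity : (0:ℝ) ≤ 2 / Kt ^ 2)] at this
    calc Kt * Real.sqrt (x + ε) ≤ Kt * (2 / Kt ^ 2) := by
          exact mul_le_mul_of_nonneg_left h4 hK0.le
      _ = 2 / Kt := by field_simp
  -- key: under an a priori bound, the β from hqc must equal α
  have key : ∀ α, ∀ s t : ℝ, 0 ≤ s → s < t → t ≤ T → t - s ≤ (Kt ^ 4)⁻¹ →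
      ‖ξ α t - ξ α s‖ < M - 2 / Kt →
      ‖ξ α t - ξ α s‖ ≤ Kt * Real.sqrt (t - s + ε) := by
    intro α s t h0 hst htT hgap hap
    obtain ⟨β, hβ⟩ := hqc s t h0 hst htT hgap α
    by_cases hβα : β = α
    · rwa [hβα] at hβ
    · exfalso
      have hsepsb := hsep s ⟨h0, le_trans hst.le htT⟩ α β (Ne.symm hβα)
      have htri : ‖ξ α s - ξ β s‖ ≤ ‖ξ α t - ξ α s‖ + ‖ξ α t - ξ β s‖ := by
        have heq : ξ α s - ξ β s = (ξ α s - ξ α t) + (ξ α t - ξ β s) := by abel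
        calc ‖ξ α s - ξ β s‖ = ‖(ξ α s - ξ α t) + (ξ α t - ξ β s)‖ := by rw [heq]
          _ ≤ ‖ξ α s - ξ α t‖ + ‖ξ α t - ξ β s‖ := norm_add_le _ _
          _ = ‖ξ α t - ξ α s‖ + ‖ξ α t - ξ β s‖ := by rw [norm_sub_rev]
      have hqs := hsqrt (t - s) (by linarith) hgap
      linarith
  -- inductive bootstrap over doubling time scales
  set δ : ℝ := M * ε / (2 * Ct) with hδdef
  have hδ0 : 0 < δ := by positivity
  have hP : ∀ k : ℕ, ∀ α, ∀ s t : ℝ, 0 ≤ s → s < t → t ≤ T → t - s ≤ (Kt ^ 4)⁻¹ →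
      t - s ≤ 2 ^ k * δ →
      ‖ξ α t - ξ α s‖ ≤ Kt * Real.sqrt (t - s + ε) := by
    intro k
    induction k with
    | zero =>
      intro α s t h0 hst htT hgap hδk
      apply key α s t h0 hst htT hgap
      have hL := hlip α s t h0 hst.le htT
      have hC0 : (0:ℝ) < Ct := by linarith
      have hb : Ct * (t - s) / ε ≤ M / 2 := by
        rw [div_le_iff₀ hε0]
        have : t - s ≤ M * ε / (2 * Ct) := by simpa [hδdef] using hδk
        rw [le_div_iff₀ (by positivity : (0:ℝ) < 2 * Ct)] at this
        nlinarith
      have h2K : 2 / Kt = 2 * Kt⁻¹ := by rw [div_eq_mul_inv]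
      linarith
    | succ k ih =>
      intro α s t h0 hst htT hgap hδk
      apply key α s t h0 hst htT hgap
      set m : ℝ := (s + t) / 2 with hmdef
      have hm1 : s < m := by rw [hmdef]; linarith
      have hm2 : m < t := by rw [hmdef]; linarith
      have hgap2 : m - s = (t - s) / 2 := by rw [hmdef]; ring
      have hgap3 : t - m = (t - s) / 2 := by rw [hmdef]; ring
      have hhalf : (t - s) / 2 ≤ (Kt ^ 4)⁻¹ := by linarith
      have hhalfδ : (t - s) / 2 ≤ 2 ^ k * δ := by
        have : (2:ℝ) ^ (k+1) = 2 * 2 ^ k := by ring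
        rw [this] at hδk
        linarith
      have h1 := ih α s m h0 hm1 (by linarith)
        (by rw [hgap2]; exact hhalf) (by rw [hgap2]; exact hhalfδ)
      have h2 := ih α m t (by linarith) hm2 htT
        (by rw [hgap3]; exact hhalf) (by rw [hgap3]; exact hhalfδ)
      have hs1 : Kt * Real.sqrt (m - s + ε) ≤ 2 / Kt := by
        rw [hgap2]; exact hsqrt _ (by linarith) hhalf
      have hs2 : Kt * Real.sqrt (t - m + ε) ≤ 2 / Kt := by
        rw [hgap3]; exact hsqrt _ (by linarith) hhalf
      have htri : ‖ξ α t - ξ α s‖ ≤ ‖ξ α t - ξ α m‖ + ‖ξ α m - ξ α s‖ := by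
        have heq : ξ α t - ξ α s = (ξ α t - ξ α m) + (ξ α m - ξ α s) := by abel
        rw [heq]; exact norm_add_le _ _
      have h8 : 8 * Kt⁻¹ = 4 * (2 / Kt) := by
        rw [div_eq_mul_inv]; ring
      linarith
  intro α s t h0 hst htT hgap
  obtain ⟨k, hk⟩ := pow_unbounded_of_one_lt ((t - s) / δ) (by norm_num : (1:ℝ) < 2)
  apply hP k α s t h0 hst htT hgap
  rw [div_lt_iff₀ hδ0] at hk
  linarith
end
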